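/- arXiv:2506.06217 — 12 statements merged into one kernel-verified Lean document; each statement's English description precedes it below -/
import Mathlib

section
/- Let n, d, k be natural numbers with d ≤ k ≤ n. Then |(1 - C(k,d)/C(n,d)) - (1 - (k/n)^d)| ≤ d²/n, where C(a,b) denotes the binomial coefficient. -/
/-!
Both quantities are products of `d` factors in `[0, 1]`:
`C(k,d) / C(n,d) = ∏_{j<d} (k - j) / (n - j)` and `(k/n)^d = ∏_{j<d} k / n`.
The difference of two such products is at most the sum of the differences of their factors,
and `|(k - j) / (n - j) - k / n| = j (n - k) / (n (n - j)) ≤ j / n ≤ d / n`.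
-/

open Finset

theorem Finset.norm_prod_sub_prod_le_sum_norm_sub {ι R : Type*} [NormedCommRing R]
    [NormOneClass R] (s : Finset ι) {f g : ι → R} (hf : ∀ i ∈ s, ‖f i‖ ≤ 1)
    (hg : ∀ i ∈ s, ‖g i‖ ≤ 1) :
    ‖∏ i ∈ s, f i - ∏ i ∈ s, g i‖ ≤ ∑ i ∈ s, ‖f i - g i‖ := by
  classical
  induction s using Finset.induction_on with
  | empty => simp
  | insert a s ha ih =>
    simp only [forall_mem_insert] at hf hg
    have hF : ‖∏ i ∈ s, f i‖ ≤ 1 :=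
      (norm_prod_le s f).trans (prod_le_one (fun _ _ ↦ norm_nonneg _) hf.2)
    rw [prod_insert ha, prod_insert ha, sum_insert ha]
    calc ‖f a * ∏ i ∈ s, f i - g a * ∏ i ∈ s, g i‖
        = ‖(f a - g a) * ∏ i ∈ s, f i + g a * (∏ i ∈ s, f i - ∏ i ∈ s, g i)‖ := by ring_nf
      _ ≤ ‖f a - g a‖ * ‖∏ i ∈ s, f i‖ + ‖g a‖ * ‖∏ i ∈ s, f i - ∏ i ∈ s, g i‖ :=
        (norm_add_le _ _).trans (add_le_add (norm_mul_le _ _) (norm_mul_le _ _))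
      _ ≤ ‖f a - g a‖ * 1 + 1 * ∑ i ∈ s, ‖f i - g i‖ := by
        gcongr
        exacts [hg.1, ih hf.2 hg.2]
      _ = _ := by ring

theorem Nat.cast_choose_div_cast_choose (K : Type*) [Field K] [CharZero K] (a b d : ℕ) :
    (a.choose d : K) / b.choose d = ∏ j ∈ range d, ((a : K) - j) / (b - j) := by
  simp only [Nat.cast_choose_eq_descPochhammer_div, descPochhammer_eval_eq_prod_range,
    prod_div_distrib]
  exact div_div_div_cancel_right₀ (Nat.cast_ne_zero.2 d.factorial_ne_zero) _ _

theorem norm_sub_div_sub_le_one {t x y : ℝ} (htx : t ≤ x) (hxy : x ≤ y) (hty : t < y) :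
    ‖(x - t) / (y - t)‖ ≤ 1 := by
  rw [Real.norm_eq_abs, abs_of_nonneg (div_nonneg (by linarith) (by linarith))]
  exact div_le_one_of_le₀ (by linarith) (by linarith)

theorem abs_sub_div_sub_sub_div_le {t x y : ℝ} (ht : 0 ≤ t) (htx : t ≤ x) (hxy : x ≤ y)
    (hty : t < y) : |(x - t) / (y - t) - x / y| ≤ t / y := by
  have hy : 0 < y := ht.trans_lt hty
  have hyt : 0 < y - t := sub_pos.2 hty
  have key : (x - t) / (y - t) - x / y = -(t * (y - x) / (y * (y - t))) := by
    field_simp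
    ring
  rw [key, abs_neg, abs_of_nonneg (by positivity), div_le_div_iff₀ (by positivity) hy]
  nlinarith [mul_nonneg (mul_nonneg ht hy.le) (sub_nonneg.2 htx)]

theorem match_prob_approx (n d k : ℕ) (hdk : d ≤ k) (hkn : k ≤ n) :
    |(1 - (k.choose d : ℝ) / (n.choose d)) - (1 - ((k : ℝ) / n) ^ d)| ≤ (d : ℝ) ^ 2 / n := by
  have hkn' : (k : ℝ) ≤ n := Nat.cast_le.2 hkn
  have hj : ∀ j ∈ range d, (j : ℝ) ≤ k ∧ (j : ℝ) < n := fun j hjd ↦ by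
    have := mem_range.1 hjd
    exact ⟨Nat.cast_le.2 (by omega), Nat.cast_lt.2 (by omega)⟩
  have hfrac : ‖(k : ℝ) / n‖ ≤ 1 := by
    rw [Real.norm_eq_abs, abs_of_nonneg (by positivity)]
    exact div_le_one_of_le₀ hkn' (Nat.cast_nonneg n)
  rw [sub_sub_sub_cancel_left, abs_sub_comm, Nat.cast_choose_div_cast_choose,
    ← card_range d, ← prod_const, card_range]
  calc |∏ j ∈ range d, ((k : ℝ) - j) / (n - j) - ∏ _j ∈ range d, (k : ℝ) / n|
      ≤ ∑ j ∈ range d, |((k : ℝ) - j) / (n - j) - k / n| :=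
        norm_prod_sub_prod_le_sum_norm_sub _
          (fun j hjd ↦ norm_sub_div_sub_le_one (hj j hjd).1 hkn' (hj j hjd).2) fun _ _ ↦ hfrac
    _ ≤ ∑ _j ∈ range d, (d : ℝ) / n := by
        refine sum_le_sum fun j hjd ↦ ?_
        obtain ⟨hjk, hjn⟩ := hj j hjd
        refine (abs_sub_div_sub_sub_div_le (Nat.cast_nonneg j) hjk hkn' hjn).trans ?_
        gcongr
        exact_mod_cast (mem_range.1 hjd).le
    _ = (d : ℝ) ^ 2 / n := by
        rw [sum_const, card_range, nsmul_eq_mul]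
        ring
end

section
/- For every real d ≥ 1, the value x_d(1) of the solution of x'(t)=1-x(t)^d, x(0)=0, at time t = 1 satisfies ((2d+1)/(4d+1))^{1/d} ≤ x_d(1) ≤ ((d+1)/(2d+1))^{1/d}. -/
/-!
For `e ≥ 0` put `q_e(t) = (e+1)/(e+1+e t^d)` and `b_e(t) = t q_e(t)^{1/d}`, so that
`b_e(t)^d = t^d q_e(t)` is a Padé-type approximation of `x(t)^d = t^d - d t^{2d}/(d+1) + …`,
exact to second order for `e = d`, and `b_e(1) = ((e+1)/(2e+1))^{1/d}`.
One computes `b_e' = q_e^{1+1/d}` and `1 - b_e^d = q_e (1 - β)` with `β = t^d/(e+1)`, so `b_e` is a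
supersolution (subsolution) of `x' = 1 - x^d` when `(1 - β)^d (1 + eβ) ≤ 1` (`≥ 1`).
Bernoulli's inequality gives the first for `e = d` and the second for `e = 2d` on `[0, 1]`; since
`y ↦ 1 - y^d` is antitone on `[0, ∞)`, the comparison principle yields `b_{2d}(1) ≤ x(1) ≤ b_d(1)`.
-/

open Set

theorem nonpos_of_hasDerivAt_nonpos_of_pos {f f' : ℝ → ℝ} {a c : ℝ} (hac : a ≤ c)
    (hf : ContinuousOn f (Icc a c)) (hf' : ∀ t ∈ Ioo a c, HasDerivAt f (f' t) t)
    (hfa : f a ≤ 0) (hf'_nonpos : ∀ t ∈ Ioo a c, 0 < f t → f' t ≤ 0) : f c ≤ 0 := by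
  set S := Icc a c ∩ f ⁻¹' Iic 0
  have hSbdd : BddAbove S := ⟨c, fun t ht => ht.1.2⟩
  obtain ⟨⟨ham, hmc⟩, hfm⟩ : sSup S ∈ S :=
    (hf.preimage_isClosed_of_isClosed isClosed_Icc isClosed_Iic).csSup_mem
      ⟨a, left_mem_Icc.2 hac, hfa⟩ hSbdd
  have hpos : ∀ t ∈ Ioo (sSup S) c, 0 < f t := fun t ht =>
    not_le.1 fun hft => ht.1.not_ge (le_csSup hSbdd ⟨⟨ham.trans ht.1.le, ht.2.le⟩, hft⟩)
  have hsub : Ioo (sSup S) c ⊆ Ioo a c := Ioo_subset_Ioo_left ham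
  have hanti : AntitoneOn f (Icc (sSup S) c) := by
    refine antitoneOn_of_hasDerivWithinAt_nonpos (convex_Icc _ _)
      (hf.mono (Icc_subset_Icc_left ham)) (fun t ht => ?_) (fun t ht => ?_) (f' := f')
    all_goals rw [interior_Icc] at ht
    · exact (hf' t (hsub ht)).hasDerivWithinAt
    · exact hf'_nonpos t (hsub ht) (hpos t ht)
  exact (hanti (left_mem_Icc.2 hmc) (right_mem_Icc.2 hmc) hmc).trans hfm

section Comparison

variable {F x b b' : ℝ → ℝ} {s : Set ℝ} {a c : ℝ}

theorem solution_le_of_supersolution (hF : AntitoneOn F s) (hac : a ≤ c)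
    (hxs : MapsTo x (Icc a c) s) (hbs : MapsTo b (Icc a c) s)
    (hx : ∀ t ∈ Icc a c, HasDerivAt x (F (x t)) t) (hb : ∀ t ∈ Icc a c, HasDerivAt b (b' t) t)
    (hsuper : ∀ t ∈ Ioo a c, F (b t) ≤ b' t) (ha : x a ≤ b a) : x c ≤ b c := by
  have key := nonpos_of_hasDerivAt_nonpos_of_pos (f := x - b) hac
    (fun t ht => ((hx t ht).sub (hb t ht)).continuousAt.continuousWithinAt)
    (fun t ht => (hx t (Ioo_subset_Icc_self ht)).sub (hb t (Ioo_subset_Icc_self ht)))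
    (sub_nonpos.2 ha) fun t ht hpos => by
      have hbx := hF (hbs (Ioo_subset_Icc_self ht)) (hxs (Ioo_subset_Icc_self ht))
        (sub_pos.1 hpos).le
      linarith [hsuper t ht]
  exact sub_nonpos.1 key

theorem subsolution_le_solution (hF : AntitoneOn F s) (hac : a ≤ c)
    (hxs : MapsTo x (Icc a c) s) (hbs : MapsTo b (Icc a c) s)
    (hx : ∀ t ∈ Icc a c, HasDerivAt x (F (x t)) t) (hb : ∀ t ∈ Icc a c, HasDerivAt b (b' t) t)
    (hsub : ∀ t ∈ Ioo a c, b' t ≤ F (b t)) (ha : b a ≤ x a) : b c ≤ x c := by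
  have key := nonpos_of_hasDerivAt_nonpos_of_pos (f := b - x) hac
    (fun t ht => ((hb t ht).sub (hx t ht)).continuousAt.continuousWithinAt)
    (fun t ht => (hb t (Ioo_subset_Icc_self ht)).sub (hx t (Ioo_subset_Icc_self ht)))
    (sub_nonpos.2 ha) fun t ht hpos => by
      have hxb := hF (hxs (Ioo_subset_Icc_self ht)) (hbs (Ioo_subset_Icc_self ht))
        (sub_pos.1 hpos).le
      linarith [hsub t ht]
  exact sub_nonpos.1 key

end Comparison

theorem one_sub_rpow_mul_one_add_mul_le_one {d β : ℝ} (hd : 1 ≤ d) (hβ₀ : 0 ≤ β) (hβ₁ : β ≤ 1) :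
    (1 - β) ^ d * (1 + d * β) ≤ 1 :=
  calc (1 - β) ^ d * (1 + d * β) ≤ (1 - β) ^ d * (1 + β) ^ d := by
        gcongr
        exact one_add_mul_self_le_rpow_one_add (by linarith) hd
    _ = (1 - β ^ 2) ^ d := by rw [← Real.mul_rpow (by linarith) (by linarith)]; ring_nf
    _ ≤ 1 := Real.rpow_le_one (by nlinarith) (by nlinarith) (by linarith)

theorem one_le_one_sub_rpow_mul_one_add_two_mul {d γ : ℝ} (hd : 1 ≤ d) (hγ₀ : 0 ≤ γ)
    (hγ : 2 * d * γ ≤ 1) : 1 ≤ (1 - γ) ^ d * (1 + 2 * d * γ) := by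
  have hbernoulli : 1 - d * γ ≤ (1 - γ) ^ d := by
    simpa [sub_eq_add_neg] using one_add_mul_self_le_rpow_one_add (s := -γ) (by nlinarith) hd
  calc (1 : ℝ) ≤ (1 - d * γ) * (1 + 2 * d * γ) := by nlinarith [mul_nonneg hγ₀ (sub_nonneg.2 hγ)]
    _ ≤ (1 - γ) ^ d * (1 + 2 * d * γ) := by gcongr

noncomputable def padeRatio (d e t : ℝ) : ℝ := (e + 1) / (e + 1 + e * t ^ d)

noncomputable def barrier (d e t : ℝ) : ℝ := t * padeRatio d e t ^ (1 / d)

section Barrier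

variable {d e t : ℝ}

theorem padeRatio_pos (he : 0 ≤ e) (ht : 0 ≤ t) : 0 < padeRatio d e t := by
  have := Real.rpow_nonneg ht d
  unfold padeRatio
  positivity

theorem padeRatio_eq_one_div (he : 0 ≤ e) : padeRatio d e t = 1 / (1 + e * (t ^ d / (e + 1))) := by
  unfold padeRatio
  field_simp

theorem barrier_nonneg (he : 0 ≤ e) (ht : 0 ≤ t) : 0 ≤ barrier d e t :=
  mul_nonneg ht (Real.rpow_nonneg (padeRatio_pos he ht).le _)

theorem barrier_one : barrier d e 1 = ((e + 1) / (2 * e + 1)) ^ (1 / d) := by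
  rw [barrier, padeRatio, Real.one_rpow, one_mul]
  ring_nf

theorem one_sub_barrier_rpow (hd : 0 < d) (he : 0 ≤ e) (ht : 0 ≤ t) :
    1 - barrier d e t ^ d = padeRatio d e t * (1 - t ^ d / (e + 1)) := by
  have hq := padeRatio_pos (d := d) he ht
  rw [barrier, Real.mul_rpow ht (Real.rpow_nonneg hq.le _), ← Real.rpow_mul hq.le,
    one_div_mul_cancel hd.ne', Real.rpow_one, padeRatio]
  have := Real.rpow_nonneg ht d
  field_simp
  ring

theorem hasDerivAt_barrier (hd : 1 ≤ d) (he : 0 ≤ e) (ht : 0 ≤ t) :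
    HasDerivAt (barrier d e) (padeRatio d e t ^ (1 / d) * padeRatio d e t) t := by
  have hq := padeRatio_pos (d := d) he ht
  have hτ : HasDerivAt (fun s : ℝ => s ^ d) (d * t ^ (d - 1)) t :=
    Real.hasDerivAt_rpow_const (Or.inr hd)
  have hden : 0 < e + 1 + e * t ^ d := by have := Real.rpow_nonneg ht d; positivity
  have hq' : HasDerivAt (padeRatio d e)
      ((0 * (e + 1 + e * t ^ d) - (e + 1) * (e * (d * t ^ (d - 1)))) / (e + 1 + e * t ^ d) ^ 2) t :=
    (hasDerivAt_const t (e + 1)).div ((hτ.const_mul e).const_add (e + 1)) hden.ne'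
  refine ((hasDerivAt_id t).mul (hq'.rpow_const (p := 1 / d) (Or.inl hq.ne'))).congr_deriv ?_
  have htd : t * t ^ (d - 1) = t ^ d := by
    rw [mul_comm, ← Real.rpow_add_one' ht (by linarith), sub_add_cancel]
  rw [Real.rpow_sub_one hq.ne', id, padeRatio]
  rw [padeRatio] at hq
  field_simp
  linear_combination (-(e * (e + 1) * d)) * htd

theorem one_sub_barrier_rpow_le_deriv (hd : 0 < d) (he : 0 ≤ e) (ht : 0 ≤ t) (hτ : t ^ d ≤ e + 1)
    (h : (1 - t ^ d / (e + 1)) ^ d * (1 + e * (t ^ d / (e + 1))) ≤ 1) :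
    1 - barrier d e t ^ d ≤ padeRatio d e t ^ (1 / d) * padeRatio d e t := by
  have hq := padeRatio_pos (d := d) he ht
  have hβ : 0 ≤ 1 - t ^ d / (e + 1) := sub_nonneg.2 ((div_le_one (by linarith)).2 hτ)
  rw [one_sub_barrier_rpow hd he ht, mul_comm]
  refine mul_le_mul_of_nonneg_right ?_ hq.le
  rw [one_div d, Real.le_rpow_inv_iff_of_pos hβ hq.le hd, padeRatio_eq_one_div he,
    le_div_iff₀ (by positivity)]
  exact h

theorem deriv_le_one_sub_barrier_rpow (hd : 0 < d) (he : 0 ≤ e) (ht : 0 ≤ t) (hτ : t ^ d ≤ e + 1)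
    (h : 1 ≤ (1 - t ^ d / (e + 1)) ^ d * (1 + e * (t ^ d / (e + 1)))) :
    padeRatio d e t ^ (1 / d) * padeRatio d e t ≤ 1 - barrier d e t ^ d := by
  have hq := padeRatio_pos (d := d) he ht
  have hβ : 0 ≤ 1 - t ^ d / (e + 1) := sub_nonneg.2 ((div_le_one (by linarith)).2 hτ)
  rw [one_sub_barrier_rpow hd he ht, mul_comm (padeRatio d e t)]
  refine mul_le_mul_of_nonneg_right ?_ hq.le
  rw [one_div d, Real.rpow_inv_le_iff_of_pos hq.le hβ hd, padeRatio_eq_one_div he,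
    div_le_iff₀ (by positivity)]
  exact h

theorem one_sub_barrier_self_rpow_le_deriv (hd : 1 ≤ d) (ht : 0 ≤ t) (hτ : t ^ d ≤ d + 1) :
    1 - barrier d d t ^ d ≤ padeRatio d d t ^ (1 / d) * padeRatio d d t := by
  have hd₀ : 0 < d := by linarith
  refine one_sub_barrier_rpow_le_deriv hd₀ hd₀.le ht hτ
    (one_sub_rpow_mul_one_add_mul_le_one hd (div_nonneg (Real.rpow_nonneg ht d) (by linarith)) ?_)
  rwa [div_le_one (by linarith)]

theorem deriv_le_one_sub_barrier_two_mul_rpow (hd : 1 ≤ d) (ht : 0 ≤ t)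
    (hτ : 2 * d * t ^ d ≤ 2 * d + 1) :
    padeRatio d (2 * d) t ^ (1 / d) * padeRatio d (2 * d) t ≤ 1 - barrier d (2 * d) t ^ d := by
  have hτ₀ := Real.rpow_nonneg ht d
  refine deriv_le_one_sub_barrier_rpow (by linarith) (by linarith) ht (by nlinarith)
    (one_le_one_sub_rpow_mul_one_add_two_mul hd (div_nonneg hτ₀ (by linarith)) ?_)
  rwa [mul_div_assoc', div_le_one (by linarith)]

end Barrier

theorem xd_one_bounds (d : ℝ) (hd : 1 ≤ d) (x : ℝ → ℝ)
    (h0 : x 0 = 0)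
    (hx : ∀ t : ℝ, 0 ≤ t → x t ∈ Set.Ico (0:ℝ) 1 ∧ HasDerivAt x (1 - x t ^ d) t) :
    ((2 * d + 1) / (4 * d + 1)) ^ (1 / d) ≤ x 1 ∧
      x 1 ≤ ((d + 1) / (2 * d + 1)) ^ (1 / d) := by
  have hd₀ : 0 < d := by linarith
  have hF : AntitoneOn (fun y : ℝ => 1 - y ^ d) (Ici 0) := fun y hy _ _ hyz =>
    sub_le_sub_left (Real.rpow_le_rpow hy hyz hd₀.le) 1
  have hxs : MapsTo x (Icc 0 1) (Ici 0) := fun t ht => (hx t ht.1).1.1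
  have hbs (e : ℝ) (he : 0 ≤ e) : MapsTo (barrier d e) (Icc 0 1) (Ici 0) := fun t ht =>
    barrier_nonneg he ht.1
  have hb₀ (e : ℝ) : barrier d e 0 = x 0 := by simp [barrier, h0]
  have hτ (t : ℝ) (ht : t ∈ Ioo (0 : ℝ) 1) : t ^ d ≤ 1 := Real.rpow_le_one ht.1.le ht.2.le hd₀.le
  constructor
  · have := subsolution_le_solution hF zero_le_one hxs (hbs _ (by positivity))
      (fun t ht => (hx t ht.1).2) (fun t ht => hasDerivAt_barrier hd (by positivity) ht.1)
      (fun t ht => deriv_le_one_sub_barrier_two_mul_rpow hd ht.1.le (by nlinarith [hτ t ht]))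
      (hb₀ _).le
    rwa [barrier_one, show 2 * (2 * d) + 1 = 4 * d + 1 by ring] at this
  · have := solution_le_of_supersolution hF zero_le_one hxs (hbs d hd₀.le)
      (fun t ht => (hx t ht.1).2) (fun t ht => hasDerivAt_barrier hd hd₀.le ht.1)
      (fun t ht => one_sub_barrier_self_rpow_le_deriv hd ht.1.le (by linarith [hτ t ht]))
      (hb₀ d).ge
    rwa [barrier_one] at this
end

section
/- For z ∈ (0,1) and real d ≥ 1, ∫_0^z du/(1-u^d) = Σ_{r=0}^∞ z^{rd+1}/(rd+1), and this sum is at least z·(1 - (1/(d+1))·log(1-z^d)). -/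
open Real

lemma rpow_natCast_mul_add_one {z : ℝ} (hz : 0 ≤ z) {d : ℝ} (hd : 0 ≤ d) (r : ℕ) :
    z ^ ((r : ℝ) * d + 1) = z * (z ^ d) ^ r := by
  rw [rpow_add_one' hz (by positivity), mul_comm (r : ℝ), rpow_mul_natCast hz, mul_comm]

lemma hasSum_rpow_natCast_mul {u d : ℝ} (hu : 0 ≤ u) (hud : u ^ d < 1) :
    HasSum (fun r : ℕ => u ^ ((r : ℝ) * d)) (1 - u ^ d)⁻¹ := by
  simpa only [mul_comm _ d, rpow_mul_natCast hu] using
    hasSum_geometric_of_lt_one (rpow_nonneg hu d) hud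

lemma integral_rpow_from_zero {a : ℝ} (ha : -1 < a) (b : ℝ) :
    ∫ x in (0 : ℝ)..b, x ^ a = b ^ (a + 1) / (a + 1) := by
  rw [integral_rpow (Or.inl ha), zero_rpow (by linarith), sub_zero]

/-- Termwise integration of `1 / (1 - u ^ d) = ∑ u ^ (r d)`, dominated on `(0, z]` by the
geometric series `∑ (z ^ d) ^ r`. -/
lemma hasSum_integral_one_div_one_sub_rpow {z d : ℝ} (hz0 : 0 ≤ z) (hz1 : z < 1) (hd : 0 < d) :
    HasSum (fun r : ℕ => z ^ ((r : ℝ) * d + 1) / ((r : ℝ) * d + 1))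
      (∫ u in (0 : ℝ)..z, 1 / (1 - u ^ d)) := by
  have hzd : z ^ d < 1 := rpow_lt_one hz0 hz1 hd
  have hexp (r : ℕ) : 0 ≤ (r : ℝ) * d := by positivity
  have hint : HasSum (fun r : ℕ => ∫ u in (0 : ℝ)..z, u ^ ((r : ℝ) * d))
      (∫ u in (0 : ℝ)..z, 1 / (1 - u ^ d)) := by
    refine intervalIntegral.hasSum_integral_of_dominated_convergence (fun r _ => (z ^ d) ^ r)
      (fun r => (continuous_rpow_const (hexp r)).aestronglyMeasurable)
      (fun r => .of_forall fun u hu => ?_) (.of_forall fun _ _ => ?_)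
      intervalIntegrable_const (.of_forall fun u hu => ?_)
    · rw [Set.uIoc_of_le hz0] at hu
      rw [norm_of_nonneg (rpow_nonneg hu.1.le _), mul_comm (r : ℝ), rpow_mul_natCast hu.1.le]
      exact pow_le_pow_left₀ (rpow_nonneg hu.1.le d) (rpow_le_rpow hu.1.le hu.2 hd.le) r
    · exact summable_geometric_of_lt_one (rpow_nonneg hz0 d) hzd
    · rw [Set.uIoc_of_le hz0] at hu
      rw [one_div]
      exact hasSum_rpow_natCast_mul hu.1.le ((rpow_le_rpow hu.1.le hu.2 hd.le).trans_lt hzd)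
  simpa only [fun r : ℕ => integral_rpow_from_zero (a := r * d) (by linarith [hexp r]) z] using hint

lemma summable_pow_div_natCast_mul_add_one {y d : ℝ} (hy0 : 0 ≤ y) (hy1 : y < 1) (hd : 0 ≤ d) :
    Summable (fun r : ℕ => y ^ r / ((r : ℝ) * d + 1)) :=
  (summable_geometric_of_lt_one hy0 hy1).of_nonneg_of_le (fun r => by positivity)
    fun r => div_le_self (by positivity) (le_add_of_nonneg_left (by positivity))

/-- Compares the shifted series termwise with `-log (1 - y) = ∑ y ^ (n + 1) / (n + 1)`, using
`(n + 1) d + 1 ≤ (n + 1) (d + 1)`. -/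
lemma one_sub_log_le_tsum_pow_div {y d : ℝ} (hy0 : 0 ≤ y) (hy1 : y < 1) (hd : 0 ≤ d) :
    1 - 1 / (d + 1) * log (1 - y) ≤ ∑' r : ℕ, y ^ r / ((r : ℝ) * d + 1) := by
  have hlog : HasSum (fun n : ℕ => y ^ (n + 1) / (n + 1) / (d + 1)) (-log (1 - y) / (d + 1)) :=
    (hasSum_pow_div_log_of_abs_lt_one (by rwa [abs_of_nonneg hy0])).div_const _
  have hsum := summable_pow_div_natCast_mul_add_one hy0 hy1 hd
  have hterm (n : ℕ) :
      y ^ (n + 1) / (n + 1) / (d + 1) ≤ y ^ (n + 1) / (((n + 1 : ℕ) : ℝ) * d + 1) := by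
    rw [div_div]
    gcongr
    push_cast
    nlinarith
  calc 1 - 1 / (d + 1) * log (1 - y)
      = y ^ 0 / (((0 : ℕ) : ℝ) * d + 1) + -log (1 - y) / (d + 1) := by
        rw [pow_zero, Nat.cast_zero, zero_mul, zero_add, div_one]; ring
    _ ≤ y ^ 0 / (((0 : ℕ) : ℝ) * d + 1) +
          ∑' n : ℕ, y ^ (n + 1) / (((n + 1 : ℕ) : ℝ) * d + 1) :=
        add_le_add_right (hlog.tsum_eq ▸
          hlog.summable.tsum_le_tsum hterm ((summable_nat_add_iff 1).2 hsum)) _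
    _ = ∑' r : ℕ, y ^ r / ((r : ℝ) * d + 1) := hsum.tsum_eq_zero_add.symm

theorem geometric_series_integral (z d : ℝ) (hz : z ∈ Set.Ioo (0:ℝ) 1) (hd : 1 ≤ d) :
    (∫ u in (0:ℝ)..z, 1 / (1 - u ^ d)) = (∑' r : ℕ, z ^ ((r : ℝ) * d + 1) / ((r : ℝ) * d + 1)) ∧
    (∑' r : ℕ, z ^ ((r : ℝ) * d + 1) / ((r : ℝ) * d + 1)) ≥
      z * (1 - (1 / (d + 1)) * Real.log (1 - z ^ d)) := by
  obtain ⟨hz0, hz1⟩ := hz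
  have hd0 : 0 < d := one_pos.trans_le hd
  refine ⟨(hasSum_integral_one_div_one_sub_rpow hz0.le hz1 hd0).tsum_eq.symm, ?_⟩
  calc z * (1 - 1 / (d + 1) * log (1 - z ^ d))
      ≤ z * ∑' r : ℕ, (z ^ d) ^ r / ((r : ℝ) * d + 1) :=
        mul_le_mul_of_nonneg_left (one_sub_log_le_tsum_pow_div (rpow_nonneg hz0.le d)
          (rpow_lt_one hz0.le hz1 hd0) hd0.le) hz0.le
    _ = ∑' r : ℕ, z ^ ((r : ℝ) * d + 1) / ((r : ℝ) * d + 1) := by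
        simp only [← tsum_mul_left, rpow_natCast_mul_add_one hz0.le hd0.le, mul_div_assoc]
end

section
/- For all q ∈ (0,1], log(2+q) ≥ ((q+1)/q)·((1 + 1/(q+1))^q - 1). -/
private lemma exp_ub4' (x : ℝ) (h0 : 0 ≤ x) (h1 : x ≤ 1) :
    Real.exp x ≤ 1 + x + x^2/2 + x^3/6 + x^4*(5/96) := by
  have h := Real.exp_bound' h0 h1 (n := 4) (by norm_num)
  refine h.trans (le_of_eq ?_)
  norm_num [Finset.sum_range_succ, Nat.factorial]
  ring

private lemma exp_ub3' (x : ℝ) (h0 : 0 ≤ x) (h1 : x ≤ 1) :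
    Real.exp x ≤ 1 + x + x^2/2 + x^3*(2/9) := by
  have h := Real.exp_bound' h0 h1 (n := 3) (by norm_num)
  refine h.trans (le_of_eq ?_)
  norm_num [Finset.sum_range_succ, Nat.factorial]
  ring

private lemma exp_lb5' (x : ℝ) (h0 : 0 ≤ x) :
    1 + x + x^2/2 + x^3/6 + x^4/24 + x^5/120 ≤ Real.exp x := by
  have h := Real.sum_le_exp_of_nonneg h0 6
  refine le_trans (le_of_eq ?_) h
  norm_num [Finset.sum_range_succ, Nat.factorial]

set_option maxHeartbeats 2000000 in
theorem log_ineq_q (q : ℝ) (hq : q ∈ Set.Ioc (0:ℝ) 1) :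
    Real.log (2 + q) ≥ ((q + 1) / q) * ((1 + 1 / (q + 1)) ^ q - 1) := by
  obtain ⟨hq0, hq1⟩ := hq
  have hqne : q ≠ 0 := ne_of_gt hq0
  have hq1' : (0:ℝ) < q + 1 := by linarith
  have h1q : (0:ℝ) ≤ 1 - q := by linarith
  have hm : ∀ k m : ℕ, (0:ℝ) ≤ q^k*(1-q)^m := fun k m =>
    mul_nonneg (pow_nonneg hq0.le k) (pow_nonneg h1q m)
  have hR1pos : (0:ℝ) ≤ ((998999/1000000) + q*((-499859/1000000) + q*((13239/40000) + q*((-46909/200000) + q*((74147/500000) + q*((-6559/100000) + q*(6937/500000))))))) := by linarith [hm 0 7, hm 1 6, hm 2 5, hm 3 4, hm 4 3, hm 5 2, hm 6 1, hm 7 0]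
  have hR1le1 : ((998999/1000000) + q*((-499859/1000000) + q*((13239/40000) + q*((-46909/200000) + q*((74147/500000) + q*((-6559/100000) + q*(6937/500000))))))) ≤ (1:ℝ) := by linarith [hm 0 7, hm 1 6, hm 2 5, hm 3 4, hm 4 3, hm 5 2, hm 6 1, hm 7 0]
  have hR2pos : (0:ℝ) ≤ ((5003/10000) + q*((-62499/500000) + q*((41641/1000000) + q*((-7733/500000) + q*((5759/1000000) + q*((-177/100000) + q*(3/10000))))))) := by linarith [hm 0 7, hm 1 6, hm 2 5, hm 3 4, hm 4 3, hm 5 2, hm 6 1, hm 7 0]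
  -- lower bound for log (q+1)
  have hx0 : (0:ℝ) ≤ q * (((998999/1000000) + q*((-499859/1000000) + q*((13239/40000) + q*((-46909/200000) + q*((74147/500000) + q*((-6559/100000) + q*(6937/500000)))))))) := mul_nonneg hq0.le hR1pos
  have hx1 : q * (((998999/1000000) + q*((-499859/1000000) + q*((13239/40000) + q*((-46909/200000) + q*((74147/500000) + q*((-6559/100000) + q*(6937/500000)))))))) ≤ 1 := by nlinarith [hR1pos, hR1le1]
  have hA : q * (((998999/1000000) + q*((-499859/1000000) + q*((13239/40000) + q*((-46909/200000) + q*((74147/500000) + q*((-6559/100000) + q*(6937/500000)))))))) ≤ Real.log (q + 1) := by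
    rw [Real.le_log_iff_exp_le hq1']
    refine (exp_ub4' _ hx0 hx1).trans ?_
    linarith [hm 0 32, hm 1 31, hm 2 30, hm 3 29, hm 4 28, hm 5 27, hm 6 26, hm 7 25, hm 8 24, hm 9 23, hm 10 22, hm 11 21, hm 12 20, hm 13 19, hm 14 18, hm 15 17, hm 16 16, hm 17 15, hm 18 14, hm 19 13, hm 20 12, hm 21 11, hm 22 10, hm 23 9, hm 24 8, hm 25 7, hm 26 6, hm 27 5, hm 28 4, hm 29 3, hm 30 2, hm 31 1, hm 32 0]
  -- upper bound for log (2+q)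
  have hy0 : (0:ℝ) ≤ q * (((5003/10000) + q*((-62499/500000) + q*((41641/1000000) + q*((-7733/500000) + q*((5759/1000000) + q*((-177/100000) + q*(3/10000)))))))) := mul_nonneg hq0.le hR2pos
  have hB : Real.log (2 + q) ≤ Real.log 2 + q * (((5003/10000) + q*((-62499/500000) + q*((41641/1000000) + q*((-7733/500000) + q*((5759/1000000) + q*((-177/100000) + q*(3/10000)))))))) := by
    rw [Real.log_le_iff_le_exp (by linarith), Real.exp_add,
      Real.exp_log (by norm_num : (0:ℝ) < 2)]
    have hlow := exp_lb5' (q * (((5003/10000) + q*((-62499/500000) + q*((41641/1000000) + q*((-7733/500000) + q*((5759/1000000) + q*((-177/100000) + q*(3/10000))))))))) hy0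
    linarith [hlow, hm 0 40, hm 1 39, hm 2 38, hm 3 37, hm 4 36, hm 5 35, hm 6 34, hm 7 33, hm 8 32, hm 9 31, hm 10 30, hm 11 29, hm 12 28, hm 13 27, hm 14 26, hm 15 25, hm 16 24, hm 17 23, hm 18 22, hm 19 21, hm 20 20, hm 21 19, hm 22 18, hm 23 17, hm 24 16, hm 25 15, hm 26 14, hm 27 13, hm 28 12, hm 29 11, hm 30 10, hm 31 9, hm 32 8, hm 33 7, hm 34 6, hm 35 5, hm 36 4, hm 37 3, hm 38 2, hm 39 1, hm 40 0]
  -- u = log(2+q) - log(q+1)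
  set u : ℝ := Real.log (2 + q) - Real.log (q + 1) with hudef
  have hu0 : 0 ≤ u := by
    have h := Real.log_le_log hq1' (by linarith : q + 1 ≤ 2 + q)
    simp only [hudef]; linarith
  have hl2 : Real.log 2 < 6931471808/10000000000 := by
    have h := Real.log_two_lt_d9; norm_num at h ⊢; linarith
  have huS : u ≤ (6931471808/10000000000) + q * ((((5003/10000) + q*((-62499/500000) + q*((41641/1000000) + q*((-7733/500000) + q*((5759/1000000) + q*((-177/100000) + q*(3/10000)))))))) - (((998999/1000000) + q*((-499859/1000000) + q*((13239/40000) + q*((-46909/200000) + q*((74147/500000) + q*((-6559/100000) + q*(6937/500000))))))))) := by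
    simp only [hudef]; linarith [hA, hB, hl2]
  have hu1 : u ≤ 1 := by
    have hSle : (6931471808/10000000000) + q * ((((5003/10000) + q*((-62499/500000) + q*((41641/1000000) + q*((-7733/500000) + q*((5759/1000000) + q*((-177/100000) + q*(3/10000)))))))) - (((998999/1000000) + q*((-499859/1000000) + q*((13239/40000) + q*((-46909/200000) + q*((74147/500000) + q*((-6559/100000) + q*(6937/500000))))))))) ≤ (1:ℝ) := by
      linarith [hm 0 8, hm 1 7, hm 2 6, hm 3 5, hm 4 4, hm 5 3, hm 6 2, hm 7 1, hm 8 0]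
    linarith
  -- key polynomial inequality
  have hKEY : ((6931471808/10000000000) + q * ((((5003/10000) + q*((-62499/500000) + q*((41641/1000000) + q*((-7733/500000) + q*((5759/1000000) + q*((-177/100000) + q*(3/10000)))))))) - (((998999/1000000) + q*((-499859/1000000) + q*((13239/40000) + q*((-46909/200000) + q*((74147/500000) + q*((-6559/100000) + q*(6937/500000))))))))))
      + (q+1) * ((6931471808/10000000000) + q * ((((5003/10000) + q*((-62499/500000) + q*((41641/1000000) + q*((-7733/500000) + q*((5759/1000000) + q*((-177/100000) + q*(3/10000)))))))) - (((998999/1000000) + q*((-499859/1000000) + q*((13239/40000) + q*((-46909/200000) + q*((74147/500000) + q*((-6559/100000) + q*(6937/500000))))))))))^2 / 2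
      + (2/9) * q * (q+1) * ((6931471808/10000000000) + q * ((((5003/10000) + q*((-62499/500000) + q*((41641/1000000) + q*((-7733/500000) + q*((5759/1000000) + q*((-177/100000) + q*(3/10000)))))))) - (((998999/1000000) + q*((-499859/1000000) + q*((13239/40000) + q*((-46909/200000) + q*((74147/500000) + q*((-6559/100000) + q*(6937/500000))))))))))^3
      ≤ (((998999/1000000) + q*((-499859/1000000) + q*((13239/40000) + q*((-46909/200000) + q*((74147/500000) + q*((-6559/100000) + q*(6937/500000)))))))) := by
    linarith [hm 0 26, hm 1 25, hm 2 24, hm 3 23, hm 4 22, hm 5 21, hm 6 20, hm 7 19, hm 8 18, hm 9 17, hm 10 16, hm 11 15, hm 12 14, hm 13 13, hm 14 12, hm 15 11, hm 16 10, hm 17 9, hm 18 8, hm 19 7, hm 20 6, hm 21 5, hm 22 4, hm 23 3, hm 24 2, hm 25 1, hm 26 0]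
  -- exp bound at q*u
  have hyu0 : (0:ℝ) ≤ q * u := mul_nonneg hq0.le hu0
  have hyu1 : q * u ≤ 1 := by nlinarith [mul_nonneg h1q hu0]
  have hexpy := exp_ub3' (q*u) hyu0 hyu1
  -- rewrite the power
  have hrpow : ((1:ℝ) + 1 / (q + 1)) ^ q = Real.exp (q * u) := by
    have hbase : (1:ℝ) + 1 / (q + 1) = (2 + q) / (q + 1) := by
      field_simp
      ring
    rw [hbase, Real.rpow_def_of_pos (by positivity)]
    congr 1
    rw [Real.log_div (by linarith) (ne_of_gt hq1')]
    simp only [hudef]; ring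
  -- monotone swap u -> S in the nonlinear terms
  have huS2 : u^2 ≤ ((6931471808/10000000000) + q * ((((5003/10000) + q*((-62499/500000) + q*((41641/1000000) + q*((-7733/500000) + q*((5759/1000000) + q*((-177/100000) + q*(3/10000)))))))) - (((998999/1000000) + q*((-499859/1000000) + q*((13239/40000) + q*((-46909/200000) + q*((74147/500000) + q*((-6559/100000) + q*(6937/500000))))))))))^2 :=
    pow_le_pow_left₀ hu0 huS 2
  have huS3 : u^3 ≤ ((6931471808/10000000000) + q * ((((5003/10000) + q*((-62499/500000) + q*((41641/1000000) + q*((-7733/500000) + q*((5759/1000000) + q*((-177/100000) + q*(3/10000)))))))) - (((998999/1000000) + q*((-499859/1000000) + q*((13239/40000) + q*((-46909/200000) + q*((74147/500000) + q*((-6559/100000) + q*(6937/500000))))))))))^3 :=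
    pow_le_pow_left₀ hu0 huS 3
  have hmain : (q+1)*u + q*(q+1)*u^2/2 + q^2*(q+1)*u^3*(2/9) ≤ Real.log (2 + q) := by
    have h1 := mul_nonneg hq0.le (sub_nonneg.2 huS)
    have h2 := mul_nonneg (mul_nonneg hq0.le hq1'.le) (sub_nonneg.2 huS2)
    have h3 := mul_nonneg (mul_nonneg (mul_nonneg hq0.le hq0.le) hq1'.le) (sub_nonneg.2 huS3)
    have h4 := mul_le_mul_of_nonneg_left hKEY hq0.le
    have hBA : Real.log (2 + q) = Real.log (q+1) + u := by simp only [hudef]; ring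
    linarith [h1, h2, h3, h4, hA, hBA.le, hBA.ge]
  -- final assembly
  rw [ge_iff_le, hrpow]
  have hfrac : (0:ℝ) ≤ (q+1)/q := by positivity
  have h5 : ((q+1)/q) * (Real.exp (q*u) - 1) ≤ ((q+1)/q) * (q*u + (q*u)^2/2 + (q*u)^3*(2/9)) :=
    mul_le_mul_of_nonneg_left (by linarith [hexpy]) hfrac
  have heq : ((q+1)/q) * (q*u + (q*u)^2/2 + (q*u)^3*(2/9)) =
      (q+1)*u + q*(q+1)*u^2/2 + q^2*(q+1)*u^3*(2/9) := by
    field_simp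
  linarith [h5, hmain, heq.le, heq.ge]
end

section
/- For all q ∈ [0,1], 1 - q²(q+2)/((q+1)(q+4)) - q·log(2/(q+4)) ≤ ((q+4)/(q+2))^q. -/
/-!
Put `L = log ((q + 4) / (q + 2)) ≥ 0`. The right side is `exp (q L) ≥ 1 + q L + (q L)² / 2`, and
`-log (2 / (q + 4)) = log ((q + 2) / 2) + L`, so it suffices to bound `q log ((q + 2) / 2)` by
`q² (q + 2) / ((q + 1) (q + 4)) + (q L)² / 2`. The bounds `log y ≤ (y - y⁻¹) / 2` and
`2 (y - 1) / (y + 1) ≤ log y` for `y ≥ 1` reduce this to a quintic being nonnegative on `[0, 1]`.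
-/

open Real Set

namespace Real

lemma log_le_half_sub_inv {y : ℝ} (hy : 1 ≤ y) : log y ≤ (y - y⁻¹) / 2 := by
  rw [← sinh_log (by positivity)]
  exact self_le_sinh_iff.2 (log_nonneg hy)

lemma two_mul_sub_one_div_add_one_le_log {y : ℝ} (hy : 1 ≤ y) :
    2 * (y - 1) / (y + 1) ≤ log y := by
  have hfirst := le_hasSum (hasSum_log_one_add (sub_nonneg.2 hy)) 0 fun k _ => by positivity
  rw [add_sub_cancel] at hfirst
  refine le_of_eq_of_le ?_ hfirst
  norm_num
  ring_nf

end Real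

lemma quintic_nonneg {q : ℝ} (hq : q ∈ Icc (0 : ℝ) 1) :
    0 ≤ 64 + 40 * q - 37 * q ^ 2 - 39 * q ^ 3 - 11 * q ^ 4 - q ^ 5 := by
  obtain ⟨hq0, hq1⟩ := hq
  nlinarith [mul_nonneg hq0 (sub_nonneg.2 hq1), pow_le_one₀ hq0 hq1 (n := 3),
    pow_le_one₀ hq0 hq1 (n := 4), pow_le_one₀ hq0 hq1 (n := 5)]

lemma mul_add_two_div_four_sub_inv_le {q : ℝ} (hq : q ∈ Icc (0 : ℝ) 1) :
    q * ((q + 2) / 4 - 1 / (q + 2)) ≤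
      q ^ 2 * (q + 2) / ((q + 1) * (q + 4)) + (q * (2 / (q + 3))) ^ 2 / 2 := by
  have hq0 : 0 ≤ q := hq.1
  rw [← sub_nonneg]
  have hdiff : q ^ 2 * (q + 2) / ((q + 1) * (q + 4)) + (q * (2 / (q + 3))) ^ 2 / 2
      - q * ((q + 2) / 4 - 1 / (q + 2))
      = q ^ 2 * (64 + 40 * q - 37 * q ^ 2 - 39 * q ^ 3 - 11 * q ^ 4 - q ^ 5)
        / (4 * (q + 1) * (q + 4) * (q + 3) ^ 2 * (q + 2)) := by
    field_simp
    ring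
  rw [hdiff]
  have := quintic_nonneg hq
  positivity

lemma mul_log_add_two_div_two_le {q : ℝ} (hq : q ∈ Icc (0 : ℝ) 1) :
    q * log ((q + 2) / 2) ≤
      q ^ 2 * (q + 2) / ((q + 1) * (q + 4)) + (q * log ((q + 4) / (q + 2))) ^ 2 / 2 := by
  have hq0 : 0 ≤ q := hq.1
  have hlog_lower : 2 / (q + 3) ≤ log ((q + 4) / (q + 2)) := by
    refine le_of_eq_of_le ?_ (two_mul_sub_one_div_add_one_le_log ?_)
    · field_simp
      ring
    · rw [one_le_div (by linarith)]
      linarith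
  calc q * log ((q + 2) / 2) ≤ q * (((q + 2) / 2 - ((q + 2) / 2)⁻¹) / 2) := by
        gcongr
        exact log_le_half_sub_inv (by linarith)
    _ = q * ((q + 2) / 4 - 1 / (q + 2)) := by
        field_simp
        ring
    _ ≤ q ^ 2 * (q + 2) / ((q + 1) * (q + 4)) + (q * (2 / (q + 3))) ^ 2 / 2 :=
        mul_add_two_div_four_sub_inv_le hq
    _ ≤ _ := by gcongr

theorem technical_ineq_2 (q : ℝ) (hq : q ∈ Set.Icc (0:ℝ) 1) :
    1 - q ^ 2 * (q + 2) / ((q + 1) * (q + 4)) - q * Real.log (2 / (q + 4)) ≤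
      ((q + 4) / (q + 2)) ^ q := by
  have hq0 : 0 ≤ q := hq.1
  have hsplit : log (2 / (q + 4)) = -(log ((q + 2) / 2) + log ((q + 4) / (q + 2))) := by
    rw [← log_mul (by positivity) (by positivity), ← log_inv]
    field_simp
  have ha : 1 ≤ (q + 4) / (q + 2) := (one_le_div (by linarith)).2 (by linarith)
  have hexp := quadratic_le_exp_of_nonneg (mul_nonneg hq0 (log_nonneg ha))
  rw [rpow_def_of_pos (by positivity), mul_comm (log _), hsplit]
  linarith [mul_log_add_two_div_two_le hq]
end

section
/- For all q ∈ [0,1], ((q+4)/(q+2))^{q-1} ≥ 1/2 + (q/8)·(1 + 4·log 2). -/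
set_option maxHeartbeats 1000000


theorem pow_q_minus_one_ineq (q : ℝ) (hq : q ∈ Set.Icc (0:ℝ) 1) :
    ((q + 4) / (q + 2)) ^ (q - 1) ≥ 1 / 2 + (q / 8) * (1 + 4 * Real.log 2) := by
  obtain ⟨hq0, hq1⟩ := hq
  have hd : (0:ℝ) < 2 * q + 4 := by linarith
  set r : ℝ := q / (2 * q + 4) with hrdef
  have hr0 : 0 ≤ r := div_nonneg hq0 hd.le
  have hr6 : r ≤ 1 / 6 := by rw [hrdef, div_le_iff₀ hd]; linarith
  have habs : |r| < 1 := by rw [abs_of_nonneg hr0]; linarith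
  have h1r : (0:ℝ) < 1 - r := by linarith
  -- Taylor upper bound for log (1 - r)
  have hlog : Real.log (1 - r) ≤ -(r + r ^ 2 / 2) := by
    have H := Real.abs_log_sub_add_sum_range_le habs 3
    have hs : (∑ i ∈ Finset.range 3, r ^ (i + 1) / (i + 1)) = r + r ^ 2 / 2 + r ^ 3 / 3 := by
      simp [Finset.sum_range_succ]
      ring
    rw [hs, abs_of_nonneg hr0] at H
    have H2 := (abs_le.mp H).2
    have h4 : r ^ 4 / (1 - r) ≤ r ^ 3 / 3 := by
      rw [div_le_div_iff₀ h1r (by norm_num : (0:ℝ) < 3)]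
      nlinarith [pow_nonneg hr0 3]
    have : r ^ (3 + 1) = r ^ 4 := by norm_num
    rw [this] at H
    linarith
  have hbase : (q + 4) / (q + 2) = 2 * (1 - r) := by
    rw [hrdef]
    field_simp
    ring
  rw [ge_iff_le, hbase, Real.rpow_def_of_pos (by nlinarith : (0:ℝ) < 2 * (1 - r))]
  have hlogsplit : Real.log (2 * (1 - r)) = Real.log 2 + Real.log (1 - r) :=
    Real.log_mul two_ne_zero (ne_of_gt h1r)
  rw [hlogsplit]
  set l := Real.log 2 with hl
  have hl1 : 0.6931 ≤ l := by
    have := Real.log_two_gt_d9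
    rw [hl]; linarith
  set R : ℝ := -((1 - q) * Real.log (1 - r)) with hRdef
  have hexpand : (l + Real.log (1 - r)) * (q - 1) = (q * l + R) + (-l) := by
    rw [hRdef]; ring
  rw [hexpand, Real.exp_add, Real.exp_neg, Real.exp_log two_pos]
  set G := q * l + R with hGd
  set P : ℝ := (1 - q) * (r + r ^ 2 / 2) with hP
  have hPnn : 0 ≤ P := by
    rw [hP]
    have : (0:ℝ) ≤ r + r ^ 2 / 2 := by positivity
    nlinarith
  have hRP : P ≤ R := by
    have h1q : (0:ℝ) ≤ 1 - q := by linarith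
    have := mul_le_mul_of_nonneg_left hlog h1q
    rw [hRdef, hP]
    nlinarith
  have hG0 : 0.6931 * q + P ≤ G := by
    have : 0.6931 * q ≤ q * l := by nlinarith
    rw [hGd]; linarith
  have hX0 : (0:ℝ) ≤ 0.6931 * q + P := by nlinarith
  have hGnn : (0:ℝ) ≤ G := le_trans hX0 hG0
  -- cubic Taylor lower bound for exp
  have hexp : 1 + G + G ^ 2 / 2 + G ^ 3 / 6 ≤ Real.exp G := by
    have H := Real.sum_le_exp_of_nonneg hGnn 4
    have hs : (∑ i ∈ Finset.range 4, G ^ i / (Nat.factorial i)) =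
        1 + G + G ^ 2 / 2 + G ^ 3 / 6 := by
      simp [Finset.sum_range_succ, Nat.factorial]
    rw [hs] at H
    exact H
  -- the key polynomial inequality
  have hkey : q / 4 ≤ P + (0.6931 * q + P) ^ 2 / 2 + (0.6931 * q + P) ^ 3 / 6 := by
    have hM : (0:ℝ) ≤ 38772021120000 + 93511894399424 * q + 71235990058272 * q ^ 2
        + 9271256307840 * q ^ 3 - 10017575856440 * q ^ 4 - 2988066563040 * q ^ 5
        + 47267448642 * q ^ 6 + 315821241 * q ^ 7 := by
      nlinarith [pow_le_one₀ hq0 hq1 (n := 4), pow_le_one₀ hq0 hq1 (n := 5),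
        pow_nonneg hq0 2, pow_nonneg hq0 3, pow_nonneg hq0 6, pow_nonneg hq0 7, hq0]
    have hid : (P + (0.6931 * q + P) ^ 2 / 2 + (0.6931 * q + P) ^ 3 / 6 - q / 4)
        * ((2 * q + 4) ^ 6 * 93750000000) =
        q ^ 2 * (38772021120000 + 93511894399424 * q + 71235990058272 * q ^ 2
        + 9271256307840 * q ^ 3 - 10017575856440 * q ^ 4 - 2988066563040 * q ^ 5
        + 47267448642 * q ^ 6 + 315821241 * q ^ 7) := by
      rw [hP, hrdef]
      field_simp
      ring
    have hDpos : (0:ℝ) < (2 * q + 4) ^ 6 * 93750000000 := by positivity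
    nlinarith [mul_nonneg (sq_nonneg q) hM, hid]
  -- combine
  have hX2 : (0.6931 * q + P) ^ 2 ≤ G ^ 2 := by nlinarith
  have hX3 : (0.6931 * q + P) ^ 3 ≤ G ^ 3 := by nlinarith
  have hmain : q / 4 + q * l ≤ G + G ^ 2 / 2 + G ^ 3 / 6 := by
    rw [hGd]
    have : q / 4 ≤ R + G ^ 2 / 2 + G ^ 3 / 6 := by
      have := hkey
      nlinarith
    linarith
  have hfin : 1 + (q / 4 + q * l) ≤ Real.exp G := by
    have : 1 + (q / 4 + q * l) ≤ 1 + G + G ^ 2 / 2 + G ^ 3 / 6 := by linarith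
    linarith [hexp]
  calc 1 / 2 + q / 8 * (1 + 4 * l) = (1 + (q / 4 + q * l)) * (2:ℝ)⁻¹ := by ring
    _ ≤ Real.exp G * (2:ℝ)⁻¹ := by
        apply mul_le_mul_of_nonneg_right hfin
        norm_num
end

section
/- For all q ∈ [0,1], ((q+4)/(q+2))^q ≥ (q+4)²/16, and log(2 + q/2) ≤ log 2 + (q/4)·(1 - q/10). -/
theorem two_ineqs (q : ℝ) (hq : q ∈ Set.Icc (0:ℝ) 1) :
    ((q + 4) / (q + 2)) ^ q ≥ (q + 4) ^ 2 / 16 ∧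
      Real.log (2 + q / 2) ≤ Real.log 2 + (q / 4) * (1 - q / 10) := by
  obtain ⟨hq0, hq1⟩ := hq
  have h2pos : (0:ℝ) < q + 2 := by linarith
  have h4pos : (0:ℝ) < q + 4 := by linarith
  have hrpos : (0:ℝ) < (q + 4) / (q + 2) := by positivity
  -- key: log(1+q/4) ≤ q/4 - q^2/40
  have hlogkey : Real.log (1 + q / 4) ≤ q / 4 - q ^ 2 / 40 := by
    have htnn : 0 ≤ q / 4 - q ^ 2 / 40 := by
      nlinarith [mul_le_mul_of_nonneg_left hq1 hq0]
    have hexp := Real.quadratic_le_exp_of_nonneg htnn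
    have h1 : 1 + q / 4 ≤ Real.exp (q / 4 - q ^ 2 / 40) := by
      nlinarith [hexp, sq_nonneg q, sq_nonneg (q - 1), mul_le_mul_of_nonneg_left hq1 hq0,
        sq_nonneg (q * q), sq_nonneg (q / 4 - q ^ 2 / 40)]
    have h2 := Real.log_le_log (by positivity) h1
    rwa [Real.log_exp] at h2
  constructor
  · -- first inequality
    have hlog53 : (1:ℝ) / 2 ≤ Real.log (5 / 3) := by
      have h : Real.exp (1/2 : ℝ) ≤ 5 / 3 := by
        have h2 : Real.exp (1/2 : ℝ) ^ 2 = Real.exp 1 := by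
          rw [← Real.exp_nat_mul]; norm_num
        nlinarith [Real.exp_one_lt_d9, Real.exp_pos (1/2 : ℝ)]
      calc (1:ℝ)/2 = Real.log (Real.exp (1/2)) := (Real.log_exp _).symm
        _ ≤ Real.log (5/3) := Real.log_le_log (Real.exp_pos _) h
    have hr53 : (5:ℝ)/3 ≤ (q + 4) / (q + 2) := by
      rw [div_le_div_iff₀ (by norm_num) h2pos]; linarith
    have hlogr : (1:ℝ)/2 ≤ Real.log ((q + 4) / (q + 2)) :=
      hlog53.trans (Real.log_le_log (by norm_num) hr53)
    have hlog14 : Real.log (1 + q / 4) ≤ q / 4 := by nlinarith [hlogkey, sq_nonneg q]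
    have hmain : 2 * Real.log (1 + q / 4) ≤ q * Real.log ((q + 4) / (q + 2)) := by
      nlinarith [mul_le_mul_of_nonneg_left hlogr hq0]
    have hLHS : ((q + 4) / (q + 2)) ^ q = Real.exp (q * Real.log ((q + 4) / (q + 2))) := by
      rw [Real.rpow_def_of_pos hrpos, mul_comm]
    have hRHS : (q + 4) ^ 2 / 16 = Real.exp (2 * Real.log (1 + q / 4)) := by
      rw [← Real.log_rpow (by positivity), Real.exp_log (by positivity)]
      rw [Real.rpow_two]
      ring_nf
    rw [ge_iff_le, hLHS, hRHS]
    exact Real.exp_le_exp.mpr hmain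
  · -- second inequality
    have h : (2 : ℝ) + q / 2 = 2 * (1 + q / 4) := by ring
    rw [h, Real.log_mul (by norm_num) (by positivity)]
    nlinarith [hlogkey]
end

section
/- For all q ∈ [0,1], with A = (q+1)/(q+2), one has -log(2)/(1 + q·log 2) ≤ log A ≤ -2·(log 2)²/(q + 2·log 2). -/
/-!
Write `L = log 2` and `φ q = log ((q + 2) / (q + 1))`, so that `log A = -φ q` and both bounds are
equalities at `q = 0`. The bound `2 L² / (q + 2 L) ≤ φ q` follows because the difference is
monotone on `[0, 1]`: its derivative has the sign of `q ((2 L² - 1) q + 6 L² - 4 L)`. For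
`φ q ≤ L / (1 + q L)` the derivative of the difference has the sign of `1 - 2 L² + q (2 L - 3 L²)`,
which decreases in `q`, so the difference is smallest at an endpoint; at `q = 1` it is the numerical
inequality `log (3 / 2) ≤ L / (1 + L)`.
-/

open Real Set

theorem monotoneOn_Icc_of_hasDerivAt_nonneg {f f' : ℝ → ℝ} {a b : ℝ}
    (hf : ∀ x ∈ Icc a b, HasDerivAt f (f' x) x) (hf' : ∀ x ∈ Ioo a b, 0 ≤ f' x) :
    MonotoneOn f (Icc a b) :=
  monotoneOn_of_hasDerivWithinAt_nonneg (convex_Icc a b)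
    (fun x hx => (hf x hx).continuousAt.continuousWithinAt)
    (fun x hx => (hf x (interior_subset hx)).hasDerivWithinAt)
    (fun x hx => hf' x (by rwa [interior_Icc] at hx))

theorem antitoneOn_Icc_of_hasDerivAt_nonpos {f f' : ℝ → ℝ} {a b : ℝ}
    (hf : ∀ x ∈ Icc a b, HasDerivAt f (f' x) x) (hf' : ∀ x ∈ Ioo a b, f' x ≤ 0) :
    AntitoneOn f (Icc a b) :=
  antitoneOn_of_hasDerivWithinAt_nonpos (convex_Icc a b)
    (fun x hx => (hf x hx).continuousAt.continuousWithinAt)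
    (fun x hx => (hf x (interior_subset hx)).hasDerivWithinAt)
    (fun x hx => hf' x (by rwa [interior_Icc] at hx))

/-- `hf'` says that `f'` changes sign at most once on `[a, b]`, from `+` to `-`. -/
theorem min_le_of_hasDerivAt_of_sign_change {f f' : ℝ → ℝ} {a b x : ℝ} (hx : x ∈ Icc a b)
    (hf : ∀ y ∈ Icc a b, HasDerivAt f (f' y) y)
    (hf' : ∀ y ∈ Icc a b, ∀ z ∈ Icc a b, y ≤ z → 0 ≤ f' z → 0 ≤ f' y) :
    min (f a) (f b) ≤ f x := by
  by_cases hfx : 0 ≤ f' x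
  · have hmono : MonotoneOn f (Icc a x) := monotoneOn_Icc_of_hasDerivAt_nonneg
      (fun y hy => hf y ⟨hy.1, hy.2.trans hx.2⟩)
      (fun y hy => hf' y ⟨hy.1.le, hy.2.le.trans hx.2⟩ x hx hy.2.le hfx)
    exact (min_le_left _ _).trans (hmono (left_mem_Icc.2 hx.1) (right_mem_Icc.2 hx.1) hx.1)
  · have hanti : AntitoneOn f (Icc x b) := antitoneOn_Icc_of_hasDerivAt_nonpos
      (fun y hy => hf y ⟨hx.1.trans hy.1, hy.2⟩)
      (fun y hy => le_of_not_ge fun hy' =>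
        hfx (hf' x hx y ⟨hx.1.trans hy.1.le, hy.2.le⟩ hy.1.le hy'))
    exact (min_le_right _ _).trans (hanti (left_mem_Icc.2 hx.2) (right_mem_Icc.2 hx.2) hx.2)

theorem hasDerivAt_log_add_two_div_add_one {x : ℝ} (hx : -1 < x) :
    HasDerivAt (fun x => log ((x + 2) / (x + 1))) (-(1 / ((x + 1) * (x + 2)))) x := by
  have hx1 : x + 1 ≠ 0 := by linarith
  have hx2 : x + 2 ≠ 0 := by linarith
  have hdiv : HasDerivAt (fun y => (y + 2) / (y + 1)) (-1 / (x + 1) ^ 2) x := by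
    refine (((hasDerivAt_id' x).add_const 2).div ((hasDerivAt_id' x).add_const 1)
      hx1).congr_deriv ?_
    ring
  refine (hdiv.log (div_ne_zero hx2 hx1)).congr_deriv ?_
  field_simp

theorem hasDerivAt_div_add {a c x : ℝ} (hx : x + c ≠ 0) :
    HasDerivAt (fun x => a / (x + c)) (-(a / (x + c) ^ 2)) x := by
  refine ((hasDerivAt_const x a).div ((hasDerivAt_id x).add_const c) hx).congr_deriv ?_
  simp [neg_div]

theorem log_three_halves_le : log (3 / 2) ≤ log 2 / (1 + log 2) := by
  have h2 := log_two_gt_d9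
  have h3 := log_three_lt_d9
  rw [log_div (by norm_num) (by norm_num), le_div_iff₀ (by positivity)]
  nlinarith

theorem log_add_two_div_add_one_le {q : ℝ} (hq : q ∈ Icc (0 : ℝ) 1) :
    log ((q + 2) / (q + 1)) ≤ log 2 / (1 + q * log 2) := by
  set L := log 2 with hL
  have hL₀ : 0.6931471803 < L := log_two_gt_d9
  set φ : ℝ → ℝ := fun x => L / (1 + x * L) - log ((x + 2) / (x + 1))
  set w : ℝ → ℝ := fun x => (1 + x * L) ^ 2 * ((x + 1) * (x + 2))
  have hw : ∀ x ∈ Icc (0 : ℝ) 1, 0 < w x := fun x hx => by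
    have := hx.1
    positivity
  have hφ : ∀ x ∈ Icc (0 : ℝ) 1,
      HasDerivAt φ ((1 - 2 * L ^ 2 + x * (2 * L - 3 * L ^ 2)) / w x) x := by
    intro x hx
    have hx₀ := hx.1
    have hxL : 1 + x * L ≠ 0 := by positivity
    have hden := ((hasDerivAt_id' x).mul_const L).const_add 1
    refine (((hasDerivAt_const x L).div hden hxL).sub
      (hasDerivAt_log_add_two_div_add_one (by linarith))).congr_deriv ?_
    simp only [w]
    field_simp
    ring
  have hφ' : ∀ y ∈ Icc (0 : ℝ) 1, ∀ z ∈ Icc (0 : ℝ) 1, y ≤ z →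
      0 ≤ (1 - 2 * L ^ 2 + z * (2 * L - 3 * L ^ 2)) / w z →
      0 ≤ (1 - 2 * L ^ 2 + y * (2 * L - 3 * L ^ 2)) / w y := by
    intro y hy z hz hyz h
    have hz' : 0 ≤ 1 - 2 * L ^ 2 + z * (2 * L - 3 * L ^ 2) := by
      simpa using (le_div_iff₀ (hw z hz)).1 h
    refine div_nonneg ?_ (hw y hy).le
    nlinarith [mul_nonneg (sub_nonneg.2 hyz) (by nlinarith : (0 : ℝ) ≤ 3 * L ^ 2 - 2 * L)]
  have hφ₀ : φ 0 = 0 := by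
    norm_num [φ, ← hL]
  have hφ₁ : 0 ≤ φ 1 := by
    norm_num [φ, ← hL]
    linarith [log_three_halves_le]
  have hmin := min_le_of_hasDerivAt_of_sign_change hq hφ hφ'
  rw [hφ₀, min_eq_left hφ₁] at hmin
  simpa only [φ, sub_nonneg] using hmin

theorem le_log_add_two_div_add_one {q : ℝ} (hq : q ∈ Icc (0 : ℝ) 1) :
    2 * log 2 ^ 2 / (q + 2 * log 2) ≤ log ((q + 2) / (q + 1)) := by
  set L := log 2 with hL
  have hL₀ : 0.6931471803 < L := log_two_gt_d9
  set ψ : ℝ → ℝ := fun x => log ((x + 2) / (x + 1)) - 2 * L ^ 2 / (x + 2 * L)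
  have hψ : ∀ x ∈ Icc (0 : ℝ) 1,
      HasDerivAt ψ (-(1 / ((x + 1) * (x + 2))) - -(2 * L ^ 2 / (x + 2 * L) ^ 2)) x :=
    fun x hx => (hasDerivAt_log_add_two_div_add_one (by linarith [hx.1])).sub
      (hasDerivAt_div_add (by linarith [hx.1]))
  have hψ' : ∀ x ∈ Ioo (0 : ℝ) 1,
      0 ≤ -(1 / ((x + 1) * (x + 2))) - -(2 * L ^ 2 / (x + 2 * L) ^ 2) := by
    intro x ⟨hx₀, hx₁⟩
    have hnum : 0 ≤ x * ((2 * L ^ 2 - 1) * x + 6 * L ^ 2 - 4 * L) := by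
      have h₀ : 0 ≤ 6 * L ^ 2 - 4 * L := by nlinarith
      have h₁ : 0 ≤ 8 * L ^ 2 - 4 * L - 1 := by nlinarith
      refine mul_nonneg hx₀.le ?_
      nlinarith [mul_nonneg (sub_nonneg.2 hx₁.le) h₀, mul_nonneg hx₀.le h₁]
    have : -(1 / ((x + 1) * (x + 2))) - -(2 * L ^ 2 / (x + 2 * L) ^ 2) =
        x * ((2 * L ^ 2 - 1) * x + 6 * L ^ 2 - 4 * L) / ((x + 1) * (x + 2) * (x + 2 * L) ^ 2) := by
      field_simp
      ring
    rw [this]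
    exact div_nonneg hnum (by positivity)
  have hψ₀ : ψ 0 = 0 := by
    norm_num [ψ, ← hL]
    field_simp
    ring
  have hmono := monotoneOn_Icc_of_hasDerivAt_nonneg hψ hψ' (left_mem_Icc.2 zero_le_one) hq hq.1
  simpa only [hψ₀, ψ, sub_nonneg] using hmono

theorem log_A_bounds (q : ℝ) (hq : q ∈ Set.Icc (0:ℝ) 1) :
    -Real.log 2 / (1 + q * Real.log 2) ≤ Real.log ((q + 1) / (q + 2)) ∧
      Real.log ((q + 1) / (q + 2)) ≤ -(2 * Real.log 2 ^ 2) / (q + 2 * Real.log 2) := by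
  have hlog : log ((q + 1) / (q + 2)) = -log ((q + 2) / (q + 1)) := by
    rw [← log_inv, inv_div]
  rw [hlog, neg_div, neg_div]
  exact ⟨neg_le_neg (log_add_two_div_add_one_le hq), neg_le_neg (le_log_add_two_div_add_one hq)⟩
end

section
/- For all q ∈ [0,1], with A = (q+1)/(q+2), one has 2A·(1 + q·A·(log 4 − 1)) ≤ 1 + q·log 2. -/
theorem bound_1_qAB (q : ℝ) (hq : q ∈ Set.Icc (0:ℝ) 1) :
    2 * ((q + 1) / (q + 2)) * (1 + q * ((q + 1) / (q + 2)) * (Real.log 4 - 1)) ≤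
      1 + q * Real.log 2 := by
  obtain ⟨h0, h1⟩ := hq
  have hL : Real.log 4 = 2 * Real.log 2 := by
    rw [show (4:ℝ) = 2^2 by norm_num, Real.log_pow]; ring
  have hl2 : Real.log 2 < 0.6931471808 := Real.log_two_lt_d9
  have hd : (0:ℝ) ≠ q + 2 := by intro h; linarith
  rw [hL, ← sub_nonneg]
  have key : (1 + q * Real.log 2) -
      2 * ((q + 1) / (q + 2)) * (1 + q * ((q + 1) / (q + 2)) * (2 * Real.log 2 - 1))
      = (q ^ 2 * ((2 - 3 * Real.log 2) * q + (3 - 4 * Real.log 2))) / (q + 2) ^ 2 := by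
    field_simp
    ring
  rw [key]
  apply div_nonneg _ (sq_nonneg _)
  have hgt := Real.log_two_gt_d9
  have hinner : 0 ≤ (2 - 3 * Real.log 2) * q + (3 - 4 * Real.log 2) := by nlinarith
  exact mul_nonneg (sq_nonneg q) hinner
end

section
/- For all q ∈ [0,1], with A = (q+1)/(q+2), the series Σ_{n=2}^∞ A^{n-2}/(n+q) converges and is at most 2·(log 4 − 1). -/
/-!
With `h = 1/(q+2)` and `A = 1 - h`, the `n`-th term equals `h Aⁿ ∫₀¹ x^(nh) dx`, so every partial
sum is at most `∫₀¹ h / (1 - (1 - h) x^h) dx`. By Bernoulli's inequality `x^h ≤ 1 + 2h(√x - 1)`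
this integrand is largest at `h = 1/2` (that is, `q = 0`), where it is `1/(2 - √x)`; its integral
is `4 log 2 - 2 = 2 (log 4 - 1)`.
-/

open Real Finset intervalIntegral

lemma integral_rpow_div {n r : ℝ} (hn : 0 ≤ n) (hr : 0 < r) :
    ∫ x in (0:ℝ)..1, x ^ (n / r) = r / (n + r) := by
  have hnr : 0 ≤ n / r := by positivity
  rw [integral_rpow (Or.inl (by linarith)), one_rpow, zero_rpow (by positivity)]
  field_simp
  ring

lemma summable_pow_div_natCast_add {a r : ℝ} (ha0 : 0 ≤ a) (ha1 : a < 1) (hr : 0 < r) :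
    Summable fun n : ℕ => a ^ n / (n + r) :=
  ((summable_geometric_of_lt_one ha0 ha1).div_const r).of_nonneg_of_le (fun n => by positivity)
    fun n => div_le_div_of_nonneg_left (pow_nonneg ha0 n) hr (by simp)

lemma tsum_pow_div_natCast_add_le_integral {a r : ℝ} {g : ℝ → ℝ} (ha0 : 0 ≤ a) (ha1 : a < 1)
    (hr : 0 < r) (hg : IntervalIntegrable g MeasureTheory.volume 0 1)
    (hle : ∀ x ∈ Set.Icc (0:ℝ) 1, r⁻¹ * (1 - a * x ^ r⁻¹)⁻¹ ≤ g x) :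
    ∑' n : ℕ, a ^ n / (n + r) ≤ ∫ x in (0:ℝ)..1, g x := by
  refine tsum_le_of_sum_range_le (fun n => by positivity) fun N => ?_
  have hterm : ∀ i : ℕ, a ^ i / (i + r) = ∫ x in (0:ℝ)..1, r⁻¹ * a ^ i * x ^ ((i : ℝ) / r) := by
    intro i
    rw [integral_const_mul, integral_rpow_div i.cast_nonneg hr]
    field_simp
  have hcont : ∀ i : ℕ, Continuous fun x : ℝ => r⁻¹ * a ^ i * x ^ ((i : ℝ) / r) := fun i =>
    continuous_const.mul (continuous_rpow_const (by positivity))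
  simp_rw [hterm]
  rw [← integral_finsetSum fun i _ => (hcont i).intervalIntegrable 0 1]
  refine integral_mono_on zero_le_one
    ((continuous_finsetSum _ fun i _ => hcont i).intervalIntegrable 0 1) hg fun x hx => ?_
  have hy0 : 0 ≤ a * x ^ r⁻¹ := mul_nonneg ha0 (rpow_nonneg hx.1 _)
  have hy1 : a * x ^ r⁻¹ < 1 :=
    (mul_le_of_le_one_right ha0 (rpow_le_one hx.1 hx.2 (by positivity))).trans_lt ha1
  calc ∑ i ∈ range N, r⁻¹ * a ^ i * x ^ ((i : ℝ) / r)
      = r⁻¹ * ∑ i ∈ range N, (a * x ^ r⁻¹) ^ i := by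
        rw [mul_sum]
        refine sum_congr rfl fun i _ => ?_
        rw [mul_pow, ← rpow_natCast (x ^ r⁻¹), ← rpow_mul hx.1, div_eq_inv_mul, mul_assoc]
    _ ≤ r⁻¹ * (1 - a * x ^ r⁻¹)⁻¹ := by
        gcongr
        simpa using geom_sum_Ico_le_of_lt_one (m := 0) (n := N) hy0 hy1
    _ ≤ g x := hle x hx

lemma two_sub_sqrt_pos {x : ℝ} (hx : x ≤ 1) : 0 < 2 - √x := by
  linarith [Real.sqrt_le_one.mpr hx]

lemma continuousOn_inv_two_sub_sqrt : ContinuousOn (fun x : ℝ => (2 - √x)⁻¹) (Set.Icc 0 1) :=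
  (continuous_const.sub continuous_sqrt).continuousOn.inv₀ fun _ hx => (two_sub_sqrt_pos hx.2).ne'

lemma integral_inv_two_sub_sqrt : ∫ x in (0:ℝ)..1, (2 - √x)⁻¹ = 4 * log 2 - 2 := by
  have hderiv : ∀ x ∈ Set.Ioo (0:ℝ) 1,
      HasDerivAt (fun x => -2 * √x - 4 * log (2 - √x)) (2 - √x)⁻¹ x := by
    intro x ⟨hx0, hx1⟩
    have hs : HasDerivAt sqrt (1 / (2 * √x)) x := hasDerivAt_sqrt hx0.ne'
    have hne : 2 - √x ≠ 0 := (two_sub_sqrt_pos hx1.le).ne'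
    refine ((hs.const_mul (-2)).sub (((hs.const_sub 2).log hne).const_mul 4)).congr_deriv ?_
    have : √x ≠ 0 := (sqrt_pos.mpr hx0).ne'
    field_simp
    ring
  have hcont : ContinuousOn (fun x => -2 * √x - 4 * log (2 - √x)) (Set.Icc 0 1) := by
    have := ContinuousOn.log (f := fun x : ℝ => 2 - √x) (by fun_prop)
      fun x (hx : x ∈ Set.Icc 0 1) => (two_sub_sqrt_pos hx.2).ne'
    fun_prop
  rw [integral_eq_sub_of_hasDerivAt_of_le zero_le_one hcont hderiv
    (continuousOn_inv_two_sub_sqrt.intervalIntegrable_of_Icc zero_le_one)]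
  norm_num
  ring

lemma mul_inv_one_sub_mul_rpow_le_inv_two_sub_sqrt {h x : ℝ} (hh0 : 0 < h) (hh : h ≤ 1 / 2)
    (hx0 : 0 ≤ x) (hx1 : x ≤ 1) :
    h * (1 - (1 - h) * x ^ h)⁻¹ ≤ (2 - √x)⁻¹ := by
  set s := √x
  have hs0 : 0 ≤ s := sqrt_nonneg x
  have hs1 : s ≤ 1 := Real.sqrt_le_one.mpr hx1
  have hbernoulli : x ^ h ≤ 1 + 2 * h * (s - 1) := by
    have hx : x ^ h = (1 + (s - 1)) ^ (2 * h) := by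
      rw [add_sub_cancel, rpow_mul hs0, rpow_two, sq_sqrt hx0]
    rw [hx]
    exact rpow_one_add_le_one_add_mul_self (by linarith) (by linarith) (by linarith)
  have hkey : h * (2 - s) ≤ 1 - (1 - h) * x ^ h :=
    calc h * (2 - s) ≤ h + 2 * h * (1 - h) * (1 - s) := by
          nlinarith [mul_nonneg (mul_nonneg hh0.le (sub_nonneg.mpr hs1)) (by linarith : 0 ≤ 1 - 2 * h)]
      _ = 1 - (1 - h) * (1 + 2 * h * (s - 1)) := by ring
      _ ≤ 1 - (1 - h) * x ^ h := by gcongr; linarith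
  rw [← div_eq_mul_inv, ← one_div, div_le_div_iff₀ (by nlinarith [two_sub_sqrt_pos hx1])
    (two_sub_sqrt_pos hx1), one_mul]
  exact hkey

theorem series_bound (q : ℝ) (hq : q ∈ Set.Icc (0:ℝ) 1) :
    Summable (fun n : ℕ => ((q + 1) / (q + 2)) ^ n / ((n : ℝ) + 2 + q)) ∧
      (∑' n : ℕ, ((q + 1) / (q + 2)) ^ n / ((n : ℝ) + 2 + q)) ≤ 2 * (Real.log 4 - 1) := by
  have hr : 0 < q + 2 := by linarith [hq.1]
  have hh : (q + 2)⁻¹ ≤ 1 / 2 := by rw [inv_le_comm₀ hr (by norm_num)]; linarith [hq.1]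
  have hA : (q + 1) / (q + 2) = 1 - (q + 2)⁻¹ := by field_simp; ring
  have hden : ∀ n : ℕ, (n : ℝ) + 2 + q = n + (q + 2) := fun n => by ring
  simp_rw [hA, hden]
  have hA0 : 0 ≤ 1 - (q + 2)⁻¹ := by linarith
  have hA1 : 1 - (q + 2)⁻¹ < 1 := by simpa using hr
  refine ⟨summable_pow_div_natCast_add hA0 hA1 hr, ?_⟩
  calc ∑' n : ℕ, (1 - (q + 2)⁻¹) ^ n / (n + (q + 2))
      ≤ ∫ x in (0:ℝ)..1, (2 - √x)⁻¹ :=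
        tsum_pow_div_natCast_add_le_integral hA0 hA1 hr
          (continuousOn_inv_two_sub_sqrt.intervalIntegrable_of_Icc zero_le_one)
          fun x hx => mul_inv_one_sub_mul_rpow_le_inv_two_sub_sqrt (by positivity) hh hx.1 hx.2
    _ = 2 * (log 4 - 1) := by
        rw [integral_inv_two_sub_sqrt, show (4:ℝ) = 2 ^ 2 by norm_num, log_pow]
        ring
end

section
/- For all q ∈ [0,1], 1 + (q/(q+1))·log(q+2) ≥ ((q+2)/(q+1))^q. -/
lemma certP1 (q : ℝ) (h0 : 0 ≤ q) (h1 : q ≤ 1) :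
    (0:ℝ) ≤ (2921:ℝ) + (14544:ℝ)*q + (29812:ℝ)*q^2 + (32272:ℝ)*q^3 + (19614:ℝ)*q^4 + (6512:ℝ)*q^5 + (1028:ℝ)*q^6 + (48:ℝ)*q^7 + (1:ℝ)*q^8 := by
  have hb : (0:ℝ) ≤ 1 - q := by linarith
  have e : ((2921:ℝ) + (14544:ℝ)*q + (29812:ℝ)*q^2 + (32272:ℝ)*q^3 + (19614:ℝ)*q^4 + (6512:ℝ)*q^5 + (1028:ℝ)*q^6 + (48:ℝ)*q^7 + (1:ℝ)*q^8) = (2921)*q^0*(1-q)^8 + (37912)*q^1*(1-q)^7 + (213408)*q^2*(1-q)^6 + (680144)*q^3*(1-q)^5 + (1341664)*q^4*(1-q)^4 + (1676544)*q^5*(1-q)^3 + (1295360)*q^6*(1-q)^2 + (565504)*q^7*(1-q)^1 + (106752)*q^8*(1-q)^0 := by ring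
  rw [e]
  exact (add_nonneg (add_nonneg (add_nonneg (add_nonneg (add_nonneg (add_nonneg (add_nonneg (add_nonneg (mul_nonneg (mul_nonneg (by norm_num : (0:ℝ) ≤ (2921)) (pow_nonneg h0 0)) (pow_nonneg hb 8)) (mul_nonneg (mul_nonneg (by norm_num : (0:ℝ) ≤ (37912)) (pow_nonneg h0 1)) (pow_nonneg hb 7))) (mul_nonneg (mul_nonneg (by norm_num : (0:ℝ) ≤ (213408)) (pow_nonneg h0 2)) (pow_nonneg hb 6))) (mul_nonneg (mul_nonneg (by norm_num : (0:ℝ) ≤ (680144)) (pow_nonneg h0 3)) (pow_nonneg hb 5))) (mul_nonneg (mul_nonneg (by norm_num : (0:ℝ) ≤ (1341664)) (pow_nonneg h0 4)) (pow_nonneg hb 4))) (mul_nonneg (mul_nonneg (by norm_num : (0:ℝ) ≤ (1676544)) (pow_nonneg h0 5)) (pow_nonneg hb 3))) (mul_nonneg (mul_nonneg (by norm_num : (0:ℝ) ≤ (1295360)) (pow_nonneg h0 6)) (pow_nonneg hb 2))) (mul_nonneg (mul_nonneg (by norm_num : (0:ℝ) ≤ (565504)) (pow_nonneg h0 7)) (pow_nonneg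 hb 1))) (mul_nonneg (mul_nonneg (by norm_num : (0:ℝ) ≤ (106752)) (pow_nonneg h0 8)) (pow_nonneg hb 0)))


lemma certP2 (q : ℝ) (h0 : 0 ≤ q) (h1 : q ≤ 1) :
    (0:ℝ) ≤ (2921:ℝ) + (8824:ℝ)*q + (9792:ℝ)*q^2 + (4752:ℝ)*q^3 + (864:ℝ)*q^4 := by
  have hb : (0:ℝ) ≤ 1 - q := by linarith
  have e : ((2921:ℝ) + (8824:ℝ)*q + (9792:ℝ)*q^2 + (4752:ℝ)*q^3 + (864:ℝ)*q^4) = (2921)*q^0*(1-q)^8 + (32192)*q^1*(1-q)^7 + (153348)*q^2*(1-q)^6 + (412384)*q^3*(1-q)^5 + (684814)*q^4*(1-q)^4 + (719232)*q^5*(1-q)^3 + (466676)*q^6*(1-q)^2 + (171104)*q^7*(1-q)^1 + (27153)*q^8*(1-q)^0 := by ring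
  rw [e]
  exact (add_nonneg (add_nonneg (add_nonneg (add_nonneg (add_nonneg (add_nonneg (add_nonneg (add_nonneg (mul_nonneg (mul_nonneg (by norm_num : (0:ℝ) ≤ (2921)) (pow_nonneg h0 0)) (pow_nonneg hb 8)) (mul_nonneg (mul_nonneg (by norm_num : (0:ℝ) ≤ (32192)) (pow_nonneg h0 1)) (pow_nonneg hb 7))) (mul_nonneg (mul_nonneg (by norm_num : (0:ℝ) ≤ (153348)) (pow_nonneg h0 2)) (pow_nonneg hb 6))) (mul_nonneg (mul_nonneg (by norm_num : (0:ℝ) ≤ (412384)) (pow_nonneg h0 3)) (pow_nonneg hb 5))) (mul_nonneg (mul_nonneg (by norm_num : (0:ℝ) ≤ (684814)) (pow_nonneg h0 4)) (pow_nonneg hb 4))) (mul_nonneg (mul_nonneg (by norm_num : (0:ℝ) ≤ (719232)) (pow_nonneg h0 5)) (pow_nonneg hb 3))) (mul_nonneg (mul_nonneg (by norm_num : (0:ℝ) ≤ (466676)) (pow_nonneg h0 6)) (pow_nonneg hb 2))) (mul_nonneg (mul_nonneg (by norm_num : (0:ℝ) ≤ (171104)) (pow_nonneg h0 7)) (pow_nonneg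 hb 1))) (mul_nonneg (mul_nonneg (by norm_num : (0:ℝ) ≤ (27153)) (pow_nonneg h0 8)) (pow_nonneg hb 0)))


lemma certP3 (q : ℝ) (h0 : 0 ≤ q) (h1 : q ≤ 1) :
    (0:ℝ) ≤ (60466176000000:ℝ)*q^3 + (362797056000000:ℝ)*q^4 + (971489894400000:ℝ)*q^5 + (1521228211200000:ℝ)*q^6 + (1519212672000000:ℝ)*q^7 + (997733894400000:ℝ)*q^8 + (431325388800000:ℝ)*q^9 + (117839059200000:ℝ)*q^10 + (16608416256000:ℝ)*q^11 + (-686368080000:ℝ)*q^12 + (-806225788800:ℝ)*q^13 + (-144317505600:ℝ)*q^14 + (-2153386944:ℝ)*q^15 + (3763428480:ℝ)*q^16 + (698055840:ℝ)*q^17 + (26131680:ℝ)*q^18 + (-10046880:ℝ)*q^19 + (-1899144:ℝ)*q^20 + (-105480:ℝ)*q^21 + (10380:ℝ)*q^22 + (2340:ℝ)*q^23 + (180:ℝ)*q^24 + (6:ℝ)*q^25 := by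
  have hb : (0:ℝ) ≤ 1 - q := by linarith
  have e : ((60466176000000:ℝ)*q^3 + (362797056000000:ℝ)*q^4 + (971489894400000:ℝ)*q^5 + (1521228211200000:ℝ)*q^6 + (1519212672000000:ℝ)*q^7 + (997733894400000:ℝ)*q^8 + (431325388800000:ℝ)*q^9 + (117839059200000:ℝ)*q^10 + (16608416256000:ℝ)*q^11 + (-686368080000:ℝ)*q^12 + (-806225788800:ℝ)*q^13 + (-144317505600:ℝ)*q^14 + (-2153386944:ℝ)*q^15 + (3763428480:ℝ)*q^16 + (698055840:ℝ)*q^17 + (26131680:ℝ)*q^18 + (-10046880:ℝ)*q^19 + (-1899144:ℝ)*q^20 + (-105480:ℝ)*q^21 + (10380:ℝ)*q^22 + (2340:ℝ)*q^23 + (180:ℝ)*q^24 + (6:ℝ)*q^25) = (60466176000000)*q^3*(1-q)^22 + (1693052928000000)*q^4*(1-q)^21 + (22557914726400000)*q^5*(1-q)^20 + (190256318899200000)*q^6*(1-q)^19 + (1139835790540800000)*q^7*(1-q)^18 + (5159628724665600000)*q^8*(1-q)^17 + (18324891097862400000)*q^9*(1-q)^16 + (52339611231187200000)*q^10*(1-q)^15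 + (122245893783449856000)*q^11*(1-q)^14 + (236131886624297904000)*q^12*(1-q)^13 + (379984150617265267200)*q^13*(1-q)^12 + (511514255667159172800)*q^14*(1-q)^11 + (576787079084600566656)*q^15*(1-q)^10 + (544089238289590127040)*q^16*(1-q)^9 + (427607534617304827680)*q^17*(1-q)^8 + (277958874561152104800)*q^18*(1-q)^7 + (147769636817513422080)*q^19*(1-q)^6 + (63185847498467825688)*q^20*(1-q)^5 + (21201747147546895440)*q^21*(1-q)^4 + (5376150267688098300)*q^22*(1-q)^3 + (968528408102834760)*q^23*(1-q)^2 + (110470575233109240)*q^24*(1-q)^1 + (5997066179072058)*q^25*(1-q)^0 := by ring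
  rw [e]
  exact (add_nonneg (add_nonneg (add_nonneg (add_nonneg (add_nonneg (add_nonneg (add_nonneg (add_nonneg (add_nonneg (add_nonneg (add_nonneg (add_nonneg (add_nonneg (add_nonneg (add_nonneg (add_nonneg (add_nonneg (add_nonneg (add_nonneg (add_nonneg (add_nonneg (add_nonneg (mul_nonneg (mul_nonneg (by norm_num : (0:ℝ) ≤ (60466176000000)) (pow_nonneg h0 3)) (pow_nonneg hb 22)) (mul_nonneg (mul_nonneg (by norm_num : (0:ℝ) ≤ (1693052928000000)) (pow_nonneg h0 4)) (pow_nonneg hb 21))) (mul_nonneg (mul_nonneg (by norm_num : (0:ℝ) ≤ (22557914726400000)) (pow_nonneg h0 5)) (pow_nonneg hb 20))) (mul_nonneg (mul_nonneg (by norm_num : (0:ℝ) ≤ (190256318899200000)) (pow_nonneg h0 6)) (pow_nonneg hb 19))) (mul_nonneg (mul_nonneg (by norm_num : (0:ℝ) ≤ (1139835790540800000)) (pow_nonneg h0 7)) (pow_nonneg hb 18))) (mul_nonneg (mul_nonneg (by norm_num : (0:ℝ) ≤ (5159628724665600000)) (pow_nonneg h0 8)) (pow_nonneg hb 17))) (mul_nonneg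 (mul_nonneg (by norm_num : (0:ℝ) ≤ (18324891097862400000)) (pow_nonneg h0 9)) (pow_nonneg hb 16))) (mul_nonneg (mul_nonneg (by norm_num : (0:ℝ) ≤ (52339611231187200000)) (pow_nonneg h0 10)) (pow_nonneg hb 15))) (mul_nonneg (mul_nonneg (by norm_num : (0:ℝ) ≤ (122245893783449856000)) (pow_nonneg h0 11)) (pow_nonneg hb 14))) (mul_nonneg (mul_nonneg (by norm_num : (0:ℝ) ≤ (236131886624297904000)) (pow_nonneg h0 12)) (pow_nonneg hb 13))) (mul_nonneg (mul_nonneg (by norm_num : (0:ℝ) ≤ (379984150617265267200)) (pow_nonneg h0 13)) (pow_nonneg hb 12))) (mul_nonneg (mul_nonneg (by norm_num : (0:ℝ) ≤ (511514255667159172800)) (pow_nonneg h0 14)) (pow_nonneg hb 11))) (mul_nonneg (mul_nonneg (by norm_num : (0:ℝ) ≤ (576787079084600566656)) (pow_nonneg h0 15)) (pow_nonneg hb 10))) (mul_nonneg (mul_nonneg (by norm_num : (0:ℝ) ≤ (544089238289590127040)) (pow_nonneg h0 16)) (pow_nonneg hb 9))) (mul_nonneg (mul_nonneg (by norm_num :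 (0:ℝ) ≤ (427607534617304827680)) (pow_nonneg h0 17)) (pow_nonneg hb 8))) (mul_nonneg (mul_nonneg (by norm_num : (0:ℝ) ≤ (277958874561152104800)) (pow_nonneg h0 18)) (pow_nonneg hb 7))) (mul_nonneg (mul_nonneg (by norm_num : (0:ℝ) ≤ (147769636817513422080)) (pow_nonneg h0 19)) (pow_nonneg hb 6))) (mul_nonneg (mul_nonneg (by norm_num : (0:ℝ) ≤ (63185847498467825688)) (pow_nonneg h0 20)) (pow_nonneg hb 5))) (mul_nonneg (mul_nonneg (by norm_num : (0:ℝ) ≤ (21201747147546895440)) (pow_nonneg h0 21)) (pow_nonneg hb 4))) (mul_nonneg (mul_nonneg (by norm_num : (0:ℝ) ≤ (5376150267688098300)) (pow_nonneg h0 22)) (pow_nonneg hb 3))) (mul_nonneg (mul_nonneg (by norm_num : (0:ℝ) ≤ (968528408102834760)) (pow_nonneg h0 23)) (pow_nonneg hb 2))) (mul_nonneg (mul_nonneg (by norm_num : (0:ℝ) ≤ (110470575233109240)) (pow_nonneg h0 24)) (pow_nonneg hb 1))) (mul_nonneg (mul_nonneg (by norm_num : (0:ℝ) ≤ (5997066179072058))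 (pow_nonneg h0 25)) (pow_nonneg hb 0)))


lemma certP4 (q : ℝ) (h0 : 0 ≤ q) (h1 : q ≤ 1) :
    (0:ℝ) ≤ (38016000:ℝ)*q^2 + (220424400:ℝ)*q^3 + (520837200:ℝ)*q^4 + (600399480:ℝ)*q^5 + (237781440:ℝ)*q^6 + (-237040320:ℝ)*q^7 + (-395094528:ℝ)*q^8 + (-260660352:ℝ)*q^9 + (-97453056:ℝ)*q^10 + (-21620736:ℝ)*q^11 + (-2737152:ℝ)*q^12 + (-165888:ℝ)*q^13 := by
  have hb : (0:ℝ) ≤ 1 - q := by linarith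
  have e : ((38016000:ℝ)*q^2 + (220424400:ℝ)*q^3 + (520837200:ℝ)*q^4 + (600399480:ℝ)*q^5 + (237781440:ℝ)*q^6 + (-237040320:ℝ)*q^7 + (-395094528:ℝ)*q^8 + (-260660352:ℝ)*q^9 + (-97453056:ℝ)*q^10 + (-21620736:ℝ)*q^11 + (-2737152:ℝ)*q^12 + (-165888:ℝ)*q^13) = (38016000)*q^2*(1-q)^11 + (638600400)*q^3*(1-q)^10 + (4815961200)*q^4*(1-q)^9 + (21479672280)*q^5*(1-q)^8 + (62787324480)*q^6*(1-q)^7 + (125841456000)*q^7*(1-q)^6 + (175534272672)*q^8*(1-q)^5 + (169018467408)*q^9*(1-q)^4 + (108586767936)*q^10*(1-q)^3 + (43180220784)*q^11*(1-q)^2 + (8998926960)*q^12*(1-q)^1 + (602686488)*q^13*(1-q)^0 := by ring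
  rw [e]
  exact (add_nonneg (add_nonneg (add_nonneg (add_nonneg (add_nonneg (add_nonneg (add_nonneg (add_nonneg (add_nonneg (add_nonneg (add_nonneg (mul_nonneg (mul_nonneg (by norm_num : (0:ℝ) ≤ (38016000)) (pow_nonneg h0 2)) (pow_nonneg hb 11)) (mul_nonneg (mul_nonneg (by norm_num : (0:ℝ) ≤ (638600400)) (pow_nonneg h0 3)) (pow_nonneg hb 10))) (mul_nonneg (mul_nonneg (by norm_num : (0:ℝ) ≤ (4815961200)) (pow_nonneg h0 4)) (pow_nonneg hb 9))) (mul_nonneg (mul_nonneg (by norm_num : (0:ℝ) ≤ (21479672280)) (pow_nonneg h0 5)) (pow_nonneg hb 8))) (mul_nonneg (mul_nonneg (by norm_num : (0:ℝ) ≤ (62787324480)) (pow_nonneg h0 6)) (pow_nonneg hb 7))) (mul_nonneg (mul_nonneg (by norm_num : (0:ℝ) ≤ (125841456000)) (pow_nonneg h0 7)) (pow_nonneg hb 6))) (mul_nonneg (mul_nonneg (by norm_num : (0:ℝ) ≤ (175534272672)) (pow_nonneg h0 8)) (pow_nonneg hb 5))) (mul_nonneg (mul_nonneg (by norm_num : (0:ℝ)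 ≤ (169018467408)) (pow_nonneg h0 9)) (pow_nonneg hb 4))) (mul_nonneg (mul_nonneg (by norm_num : (0:ℝ) ≤ (108586767936)) (pow_nonneg h0 10)) (pow_nonneg hb 3))) (mul_nonneg (mul_nonneg (by norm_num : (0:ℝ) ≤ (43180220784)) (pow_nonneg h0 11)) (pow_nonneg hb 2))) (mul_nonneg (mul_nonneg (by norm_num : (0:ℝ) ≤ (8998926960)) (pow_nonneg h0 12)) (pow_nonneg hb 1))) (mul_nonneg (mul_nonneg (by norm_num : (0:ℝ) ≤ (602686488)) (pow_nonneg h0 13)) (pow_nonneg hb 0)))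


set_option maxHeartbeats 3200000

lemma expLow (x : ℝ) (h0 : 0 ≤ x) :
    1 + x + x^2/2 + x^3/6 + x^4/24 ≤ Real.exp x := by
  have h := Real.sum_le_exp_of_nonneg h0 5
  simp [Finset.sum_range_succ] at h
  norm_num [Nat.factorial] at h
  linarith

lemma expUp4 (x : ℝ) (h0 : 0 ≤ x) (h2 : x ≤ 1/2) :
    Real.exp x ≤ 1 + x + x^2/2 + (37/192)*x^3 := by
  have h := Real.exp_bound' h0 (by linarith) (n := 4) (by norm_num)
  simp [Finset.sum_range_succ] at h
  norm_num [Nat.factorial] at h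
  nlinarith [pow_nonneg h0 3, pow_nonneg h0 2]

lemma expUp5 (x : ℝ) (h0 : 0 ≤ x) (h2 : x ≤ 1) :
    Real.exp x ≤ 1 + x + x^2/2 + x^3/6 + x^4/24 + (6/600)*x^5 := by
  have h := Real.exp_bound' h0 h2 (n := 5) (by norm_num)
  simp [Finset.sum_range_succ] at h
  norm_num [Nat.factorial] at h
  linarith

theorem first_ineq (q : ℝ) (hq : q ∈ Set.Icc (0:ℝ) 1) :
    1 + (q / (q + 1)) * Real.log (q + 2) ≥ ((q + 2) / (q + 1)) ^ q := by
  obtain ⟨h0, h1⟩ := hq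
  have hq1 : (0:ℝ) < q + 1 := by linarith
  have hq2 : (0:ℝ) < q + 2 := by linarith
  have hbase : (0:ℝ) < (q + 2) / (q + 1) := by positivity
  set s := Real.log (q + 1) with hs_def
  set t := Real.log (q + 2) with ht_def
  -- rewrite rpow as exp
  have hrw : ((q + 2) / (q + 1)) ^ q = Real.exp (q * (t - s)) := by
    rw [Real.rpow_def_of_pos hbase, Real.log_div (by linarith) (by linarith), mul_comm]
  -- bounds
  set T : ℝ := (1+q)*(7+q)/(10+4*q) with hT_def
  set D : ℝ := (6*q+7)/((q+1)*(6*q+10)) with hD_def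
  set g : ℝ := (6*q+3*q^2)/(6+6*q+q^2) - q^3/60 with hg_def
  have hden1 : (0:ℝ) < 10+4*q := by linarith
  have hden2 : (0:ℝ) < (q+1)*(6*q+10) := by nlinarith
  have hden3 : (0:ℝ) < 6+6*q+q^2 := by nlinarith
  have hT0 : 0 ≤ T := by positivity
  have hD0 : 0 ≤ D := by positivity
  have hq3 : q^3 ≤ q := by nlinarith [sq_nonneg q]
  have hg0 : 0 ≤ g := by
    rw [hg_def, sub_nonneg, div_le_div_iff₀ (by norm_num) hden3]
    nlinarith [hq3]
  have hg1 : g ≤ 1 := by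
    rw [hg_def]
    have h' : (6*q+3*q^2)/(6+6*q+q^2) ≤ 1 := by
      rw [div_le_one hden3]; nlinarith
    have h'' : 0 ≤ q^3/60 := by positivity
    linarith
  -- t ≤ T
  have hT : t ≤ T := by
    rw [ht_def, Real.log_le_iff_le_exp hq2]
    have hlow := expLow T hT0
    have e : (1 + T + T^2/2 + T^3/6 + T^4/24) - (q+2)
        = ((2921:ℝ) + (14544:ℝ)*q + (29812:ℝ)*q^2 + (32272:ℝ)*q^3 + (19614:ℝ)*q^4 + (6512:ℝ)*q^5 + (1028:ℝ)*q^6 + (48:ℝ)*q^7 + (1:ℝ)*q^8) / (24*(10+4*q)^4) := by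
      rw [hT_def]; field_simp; ring
    have hc := certP1 q h0 h1
    have : 0 ≤ (1 + T + T^2/2 + T^3/6 + T^4/24) - (q+2) := by
      rw [e]; positivity
    linarith
  -- t - s ≤ D
  have hD : t - s ≤ D := by
    have hlog : t - s = Real.log ((q+2)/(q+1)) := by
      rw [ht_def, hs_def, Real.log_div (by linarith) (by linarith)]
    rw [hlog, Real.log_le_iff_le_exp hbase]
    have hlow := expLow D hD0
    have e : (1 + D + D^2/2 + D^3/6 + D^4/24) - (q+2)/(q+1)
        = ((2921:ℝ) + (8824:ℝ)*q + (9792:ℝ)*q^2 + (4752:ℝ)*q^3 + (864:ℝ)*q^4) / (24*((q+1)*(6*q+10))^4) := by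
      rw [hD_def]; field_simp; ring
    have hc := certP2 q h0 h1
    have : 0 ≤ (1 + D + D^2/2 + D^3/6 + D^4/24) - (q+2)/(q+1) := by
      rw [e]; positivity
    linarith
  -- g ≤ s
  have hS : g ≤ s := by
    rw [hs_def, Real.le_log_iff_exp_le hq1]
    have hup := expUp5 g hg0 hg1
    have e : (q+1) - (1 + g + g^2/2 + g^3/6 + g^4/24 + (6/600)*g^5)
        = ((60466176000000:ℝ)*q^3 + (362797056000000:ℝ)*q^4 + (971489894400000:ℝ)*q^5 + (1521228211200000:ℝ)*q^6 + (1519212672000000:ℝ)*q^7 + (997733894400000:ℝ)*q^8 + (431325388800000:ℝ)*q^9 + (117839059200000:ℝ)*q^10 + (16608416256000:ℝ)*q^11 + (-686368080000:ℝ)*q^12 + (-806225788800:ℝ)*q^13 + (-144317505600:ℝ)*q^14 + (-2153386944:ℝ)*q^15 + (3763428480:ℝ)*q^16 + (698055840:ℝ)*q^17 + (26131680:ℝ)*q^18 + (-10046880:ℝ)*q^19 + (-1899144:ℝ)*q^20 + (-105480:ℝ)*q^21 + (10380:ℝ)*q^22 + (2340:ℝ)*q^23 + (180:ℝ)*q^24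 + (6:ℝ)*q^25) / (600*(60*(6+6*q+q^2))^5) := by
      rw [hg_def]; field_simp; ring
    have hc := certP3 q h0 h1
    have : 0 ≤ (q+1) - (1 + g + g^2/2 + g^3/6 + g^4/24 + (6/600)*g^5) := by
      rw [e]; positivity
    linarith
  -- 0 ≤ t - s
  have hts0 : 0 ≤ t - s := by
    rw [ht_def, hs_def, sub_nonneg]
    exact Real.log_le_log (by linarith) (by linarith)
  set x : ℝ := q * (t - s) with hx_def
  have hx0 : 0 ≤ x := mul_nonneg h0 hts0
  have hxD : x ≤ q * D := mul_le_mul_of_nonneg_left hD h0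
  have hqD : q * D ≤ 1/2 := by
    rw [hD_def, mul_comm, div_mul_eq_mul_div, div_le_iff₀ hden2]
    nlinarith
  have hx2 : x ≤ 1/2 := le_trans hxD hqD
  have hexp := expUp4 x hx0 hx2
  have hx2' : x^2 ≤ (q*D)^2 := by nlinarith
  have hx3' : x^3 ≤ (q*D)^3 := by nlinarith
  -- master rational inequality
  have hmaster : q^2/(q+1)*T + (q*D)^2/2 + (37/192)*(q*D)^3 ≤ q * g := by
    rw [← sub_nonneg]
    have e : q * g - (q^2/(q+1)*T + (q*D)^2/2 + (37/192)*(q*D)^3)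
        = ((38016000:ℝ)*q^2 + (220424400:ℝ)*q^3 + (520837200:ℝ)*q^4 + (600399480:ℝ)*q^5 + (237781440:ℝ)*q^6 + (-237040320:ℝ)*q^7 + (-395094528:ℝ)*q^8 + (-260660352:ℝ)*q^9 + (-97453056:ℝ)*q^10 + (-21620736:ℝ)*q^11 + (-2737152:ℝ)*q^12 + (-165888:ℝ)*q^13) / (192*(60*(6+6*q+q^2))*(10+4*q)*((q+1)*(6*q+10))^3) := by
      rw [hg_def, hT_def, hD_def]; field_simp; ring
    have hc := certP4 q h0 h1
    rw [e]; positivity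
  -- combine
  have hcoef : 0 ≤ q^2/(q+1) := by positivity
  have h5 : q^2/(q+1)*t ≤ q^2/(q+1)*T := mul_le_mul_of_nonneg_left hT hcoef
  have hid : q*t - (q/(q+1))*t = q^2/(q+1)*t := by field_simp; ring
  have hgs : q*g ≤ q*s := mul_le_mul_of_nonneg_left hS h0
  have hxe : x = q*t - q*s := by rw [hx_def]; ring
  clear_value s t T D g x
  have key : Real.exp x ≤ 1 + q/(q+1) * t := by
    linarith [hexp, hx2', hx3', h5, hid, hgs, hmaster, hxe]
  rw [ge_iff_le, hrw]
  exact key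
end

section
/- Let d ≥ 1 and let x(d,t) be the unique value in [0,1) with ∫_0^{x(d,t)} dv/(1−v^d) = t. Then for every t ∈ [0,1], ∫_0^{x(d,t)} (1 + log u)/(1 − u^d) du ≤ 0. -/
/-!
Write `F u = ∫₀ᵘ f` with `f v = 1 / (1 - v ^ d) ≥ 1`, so that `F u ≥ u` and `F x = t`.
Then `(1 + log u) f u ≤ (1 + log (F u)) f u`, and the right-hand side is the derivative of
`F log F`; integrating over `[0, x]` bounds the integral by `t log t ≤ 0`.
-/

open Set Real MeasureTheory intervalIntegral

theorem one_le_one_div_one_sub_rpow {d v : ℝ} (hd : 0 < d) (hv : v ∈ Ico 0 1) :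
    1 ≤ 1 / (1 - v ^ d) := by
  have hlt : v ^ d < 1 := rpow_lt_one hv.1 hv.2 hd
  rw [le_div_iff₀ (by linarith), one_mul]
  linarith [rpow_nonneg hv.1 d]

theorem continuousOn_one_div_one_sub_rpow {d : ℝ} (hd : 0 < d) :
    ContinuousOn (fun v : ℝ => 1 / (1 - v ^ d)) (Ico 0 1) :=
  continuousOn_const.div
    (continuousOn_const.sub (continuousOn_id.rpow_const fun _ _ => Or.inr hd.le))
    fun _ hv => (sub_pos.2 (rpow_lt_one hv.1 hv.2 hd)).ne'

section Primitive

variable {f : ℝ → ℝ} {x : ℝ}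

theorem self_le_integral_of_one_le (hf : ContinuousOn f (Icc 0 x))
    (hf1 : ∀ u ∈ Icc 0 x, 1 ≤ f u) {u : ℝ} (hu : u ∈ Icc 0 x) :
    u ≤ ∫ v in 0..u, f v := by
  have hfu : ContinuousOn f (Icc 0 u) := hf.mono (Icc_subset_Icc le_rfl hu.2)
  simpa using integral_mono_on hu.1 intervalIntegrable_const
    (hfu.intervalIntegrable_of_Icc (μ := volume) hu.1)
    fun v hv => hf1 v ⟨hv.1, hv.2.trans hu.2⟩

theorem hasDerivAt_integral_of_continuousOn_Icc (hf : ContinuousOn f (Icc 0 x)) {u : ℝ}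
    (hu : u ∈ Ioo 0 x) : HasDerivAt (fun u => ∫ v in 0..u, f v) (f u) u :=
  integral_hasDerivAt_right
    ((hf.mono (Icc_subset_Icc le_rfl hu.2.le)).intervalIntegrable_of_Icc (μ := volume) hu.1.le)
    ((hf.mono Ioo_subset_Icc_self).stronglyMeasurableAtFilter isOpen_Ioo u hu)
    (hf.continuousAt (Icc_mem_nhds hu.1 hu.2))

theorem integral_one_add_log_mul_le (hx : 0 ≤ x) (hf : ContinuousOn f (Icc 0 x))
    (hf1 : ∀ u ∈ Icc 0 x, 1 ≤ f u) :
    ∫ u in 0..x, (1 + log u) * f u ≤ (∫ u in 0..x, f u) * log (∫ u in 0..x, f u) := by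
  set F : ℝ → ℝ := fun u => ∫ v in 0..u, f v
  have hF_cont : ContinuousOn F (Icc 0 x) := by
    simpa [uIcc_of_le hx] using continuousOn_primitive_interval (μ := volume)
      (hf.integrableOn_Icc.mono_set (uIcc_of_le hx).subset)
  have hF_pos : ∀ u ∈ Ioo 0 x, 0 < F u := fun u hu =>
    hu.1.trans_le (self_le_integral_of_one_le hf hf1 (Ioo_subset_Icc_self hu))
  have hint : IntegrableOn (fun u => (1 + log u) * f u) (Icc 0 x) := by
    rw [← intervalIntegrable_iff_integrableOn_Icc_of_le hx]
    exact (intervalIntegrable_const.add intervalIntegrable_log').mul_continuousOn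
      (by rwa [uIcc_of_le hx])
  have bound := integral_le_sub_of_hasDeriv_right_of_le hx
    (continuous_mul_log.comp_continuousOn hF_cont)
    (fun u hu => ((hasDerivAt_mul_log (hF_pos u hu).ne').comp u
      (hasDerivAt_integral_of_continuousOn_Icc hf hu)).hasDerivWithinAt) hint
    fun u hu => by
      have hlog : log u ≤ log (F u) :=
        log_le_log hu.1 (self_le_integral_of_one_le hf hf1 (Ioo_subset_Icc_self hu))
      have hf0 : 0 ≤ f u := zero_le_one.trans (hf1 u (Ioo_subset_Icc_self hu))
      rw [add_comm (log (F u))]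
      exact mul_le_mul_of_nonneg_right (by linarith) hf0
  simpa [F] using bound

end Primitive

theorem integral_sign_condition (d t x : ℝ) (hd : 1 ≤ d) (ht : t ∈ Set.Icc (0:ℝ) 1)
    (hx : x ∈ Set.Ico (0:ℝ) 1)
    (hxt : (∫ v in (0:ℝ)..x, 1 / (1 - v ^ d)) = t) :
    (∫ u in (0:ℝ)..x, (1 + Real.log u) / (1 - u ^ d)) ≤ 0 := by
  have hd0 : 0 < d := by linarith
  have hsub : Icc 0 x ⊆ Ico 0 1 := Icc_subset_Ico_right hx.2
  calc (∫ u in (0:ℝ)..x, (1 + log u) / (1 - u ^ d))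
      = ∫ u in (0:ℝ)..x, (1 + log u) * (1 / (1 - u ^ d)) := by simp only [mul_one_div]
    _ ≤ t * log t := hxt ▸ integral_one_add_log_mul_le hx.1
          ((continuousOn_one_div_one_sub_rpow hd0).mono hsub)
          fun u hu => one_le_one_div_one_sub_rpow hd0 (hsub hu)
    _ ≤ 0 := mul_log_nonpos ht.1 ht.2
end
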